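/- arXiv:math/0602300 — 9 statements merged into one kernel-verified Lean document; each statement's English description precedes it below -/
import Mathlib

section
/- For integers x and t with t ≥ 0, t ≡ x (mod 2), and |x| ≤ t, define H(x,t) = 2^{-t} · C(t, (t+x)/2) and INF(y,t) = H(y+1, t-1) − H(y,t) (with H(x,t) = 0 when t < 0 or t ≢ x mod 2 or |x| > t, and INF(y,t) = 0 for t ≤ 0). Then for all integers y and t ≥ 1, INF(y,t) = −(y/t) · H(y,t). -/
/-- Heat kernel of the simple symmetric random walk on ℤ:
`H x t = 2^{-t} * choose t ((t+x)/2)` when `t ≥ 0`, `t ≡ x (mod 2)`, `|x| ≤ t`; else `0`. -/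
noncomputable def H (x t : ℤ) : ℝ :=
  if 0 ≤ t ∧ (2 : ℤ) ∣ (t - x) ∧ |x| ≤ t then
    (2 : ℝ) ^ (-t) * (t.toNat.choose ((t + x) / 2).toNat)
  else 0

/-- Influence of a deterministic right-step compared to a random step. -/
noncomputable def INF (y t : ℤ) : ℝ :=
  if t ≤ 0 then 0 else H (y + 1) (t - 1) - H y t

/-- `t_max y = ⌊(y² - 4)/3⌋ + 2`. -/
def tmax (y : ℤ) : ℤ := Int.fdiv (y ^ 2 - 4) 3 + 2

theorem inf_eq_neg_div (y t : ℤ) (ht : 1 ≤ t) :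
    INF y t = -((y : ℝ) / (t : ℝ)) * H y t := by
  have ht0 : ¬ t ≤ 0 := by omega
  rw [INF, if_neg ht0]
  by_cases hd : (2:ℤ) ∣ (t - y)
  · by_cases hy : |y| ≤ t
    · rw [abs_le] at hy
      by_cases hyt : y = t
      · subst hyt
        have h1 : H (y+1) (y-1) = 0 := by
          rw [H, if_neg]
          push_neg
          intro _ _
          rw [lt_abs]
          omega
        rw [h1]
        have : ((y:ℝ)) / (y:ℝ) = 1 := div_self (by exact_mod_cast (by omega : y ≠ 0))
        rw [this]; ring
      · have hcond2 : (0 ≤ t - 1 ∧ (2:ℤ) ∣ (t - 1 - (y+1)) ∧ |y+1| ≤ t - 1) := by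
          refine ⟨by omega, by omega, ?_⟩
          rw [abs_le]; omega
        have hcond1 : (0 ≤ t ∧ (2:ℤ) ∣ (t - y) ∧ |y| ≤ t) := ⟨by omega, hd, by rw [abs_le]; omega⟩
        rw [H, H, if_pos hcond1, if_pos hcond2]
        have he : t - 1 + (y + 1) = t + y := by ring
        rw [he]
        set n := t.toNat with hn
        set k := ((t + y)/2).toNat with hk
        have hnt : (n:ℤ) = t := Int.toNat_of_nonneg (by omega)
        have hk2 : t + y = 2 * (k:ℤ) := by
          have h2 : (2:ℤ) ∣ (t + y) := by omega
          rw [hk, Int.toNat_of_nonneg (by omega)]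
          omega
        have hkn : k + 1 ≤ n := by omega
        have htn : (t - 1).toNat = n - 1 := by omega
        rw [htn]
        have key : (n-1).choose k * n = n.choose k * (n - k) := by
          have := Nat.choose_mul_succ_eq (n-1) k
          rwa [Nat.sub_add_cancel (by omega)] at this
        have keyR : ((n-1).choose k : ℝ) * n = (n.choose k : ℝ) * ((n:ℝ) - k) := by
          have := congrArg (Nat.cast : ℕ → ℝ) key
          push_cast [Nat.cast_sub (by omega : k ≤ n)] at this
          linarith
        have hyR : (y:ℝ) = 2*(k:ℝ) - (n:ℝ) := by
          have : (t:ℝ) + y = 2 * k := by exact_mod_cast hk2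
          have ht' : (t:ℝ) = n := by exact_mod_cast hnt.symm
          linarith
        have htR : (t:ℝ) = n := by exact_mod_cast hnt.symm
        have hpow : (2:ℝ) ^ (-(t-1)) = 2 * (2:ℝ) ^ (-t) := by
          rw [show -(t-1) = -t + 1 by ring, zpow_add₀ (two_ne_zero)]
          ring
        rw [hpow, htR, hyR]
        have hn0 : (n:ℝ) ≠ 0 := Nat.cast_ne_zero.mpr (by omega)
        have hfin : 2*((n-1).choose k : ℝ) - (n.choose k : ℝ)
            = ((n:ℝ) - 2*k)/n * (n.choose k : ℝ) := by
          rw [div_mul_eq_mul_div, eq_div_iff hn0]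
          linear_combination 2*keyR
        linear_combination (2:ℝ)^(-t) * hfin
    · have hy' : t < y ∨ t < -y := lt_abs.mp (lt_of_not_ge hy)
      have h1 : H y t = 0 := by
        rw [H, if_neg]; push_neg; intro _ _; exact lt_of_not_ge hy
      have h2 : H (y+1) (t-1) = 0 := by
        rw [H, if_neg]; push_neg; intro _ _
        rw [lt_abs]
        omega
      rw [h1, h2]; ring
  · have h1 : H y t = 0 := by
      rw [H, if_neg]; push_neg; intro _ h; exact absurd h hd
    have h2 : H (y+1) (t-1) = 0 := by
      rw [H, if_neg]; push_neg; intro _ h; exact absurd (by omega : (2:ℤ) ∣ t - y) hd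
    rw [h1, h2]; ring
end

section
/- Let f : ℤ → ℝ be unimodal and let k ≥ 1. Define F : ℤ → ℝ by F(z) = ∑_{i=0}^{k-1} f(z+i). Then F is unimodal. -/
/-!
The increment of the rolling sum `F z = ∑_{i<k} f (z + i)` is `F (z + 1) - F z = f (z + k) - f z`.
For unimodal `f` with mode `m` this increment is nonnegative for `z + k ≤ m`, nonpositive for
`z ≥ m`, and once it is negative it stays nonpositive. So the increments of `F` change sign
at most once, and `F` is unimodal.
-/

open Finset Set

/-- The mode is the least point `≥ b` from which `F` never increases again. -/
theorem Int.exists_monotoneOn_antitoneOn_of_add_one {α : Type*} [LinearOrder α] (F : ℤ → α)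
    {b c : ℤ} (hlow : ∀ z < b, F z ≤ F (z + 1)) (hhigh : ∀ z, c ≤ z → F (z + 1) ≤ F z)
    (hpersist : ∀ z w, F (z + 1) < F z → z ≤ w → F (w + 1) ≤ F w) :
    ∃ M, MonotoneOn F (Iic M) ∧ AntitoneOn F (Ici M) := by
  obtain ⟨M, ⟨-, hM⟩, hleast⟩ := Int.exists_least_of_bdd
    (P := fun z => b ≤ z ∧ ∀ w, z ≤ w → F (w + 1) ≤ F w) ⟨b, fun _ h => h.1⟩
    ⟨max b c, le_max_left b c, fun w hw => hhigh w (le_of_max_le_right hw)⟩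
  refine ⟨M, monotoneOn_of_le_add_one ordConnected_Iic fun z _ _ hz => ?_,
    antitoneOn_of_add_one_le ordConnected_Ici fun z _ hz _ => hM z hz⟩
  by_contra! hdrop
  have hbz : b ≤ z := by
    by_contra! hzb
    exact hdrop.not_ge (hlow z hzb)
  have := hleast z ⟨hbz, fun w => hpersist z w hdrop⟩
  exact absurd (Set.mem_Iic.mp hz) (by omega)

theorem Finset.sum_range_shift_add_one {M : Type*} [AddCommGroup M] (f : ℤ → M) (k : ℕ)
    (z : ℤ) :
    ∑ i ∈ range k, f (z + 1 + i) = ∑ i ∈ range k, f (z + i) + (f (z + k) - f z) := by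
  induction k with
  | zero => simp
  | succ k ih =>
    rw [sum_range_succ, sum_range_succ, ih]
    push_cast
    rw [show z + 1 + k = z + (k + 1) by ring]
    abel

section Unimodal

variable {α : Type*} [LinearOrder α] {f : ℤ → α} {m : ℤ}

theorem MonotoneOn.apply_le_apply_add_of_add_le (hmono : MonotoneOn f (Iic m)) {z d : ℤ}
    (hd : 0 ≤ d) (hzd : z + d ≤ m) : f z ≤ f (z + d) :=
  hmono (by simp only [Set.mem_Iic]; omega) hzd (by omega)

theorem AntitoneOn.apply_add_le_apply_of_le (hanti : AntitoneOn f (Ici m)) {z d : ℤ}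
    (hd : 0 ≤ d) (hz : m ≤ z) :
    f (z + d) ≤ f z :=
  hanti hz (by simp only [Set.mem_Ici]; omega) (by omega)

theorem apply_add_le_apply_of_apply_add_lt (hmono : MonotoneOn f (Iic m))
    (hanti : AntitoneOn f (Ici m)) {z w d : ℤ} (hd : 0 ≤ d) (hdrop : f (z + d) < f z)
    (hzw : z ≤ w) : f (w + d) ≤ f w := by
  have hm : m < z + d :=
    lt_of_not_ge fun h => hdrop.not_ge (hmono.apply_le_apply_add_of_add_le hd h)
  rcases le_or_gt m w with hmw | hwm
  · exact hanti.apply_add_le_apply_of_le hd hmw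
  · calc f (w + d) ≤ f (z + d) := hanti hm.le (by simp only [Set.mem_Ici]; omega) (by omega)
      _ ≤ f z := hdrop.le
      _ ≤ f w := hmono (by simp only [Set.mem_Iic]; omega) hwm.le hzw

end Unimodal

theorem rolling_sum_unimodal_general
    (f : ℤ → ℝ) (k : ℕ)
    (m : ℤ)
    (hmono : MonotoneOn f (Set.Iic m)) (hanti : AntitoneOn f (Set.Ici m)) :
    ∃ M : ℤ,
      MonotoneOn (fun z : ℤ => ∑ i ∈ Finset.range k, f (z + i)) (Set.Iic M) ∧
      AntitoneOn (fun z : ℤ => ∑ i ∈ Finset.range k, f (z + i)) (Set.Ici M) := by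
  have hk_nonneg : (0 : ℤ) ≤ k := k.cast_nonneg
  refine Int.exists_monotoneOn_antitoneOn_of_add_one _ (b := m - k) (c := m) ?_ ?_ ?_
  · intro z hz
    simp only [sum_range_shift_add_one, le_add_iff_nonneg_right, sub_nonneg]
    exact hmono.apply_le_apply_add_of_add_le hk_nonneg (by omega)
  · intro z hz
    simp only [sum_range_shift_add_one, add_le_iff_nonpos_right, sub_nonpos]
    exact hanti.apply_add_le_apply_of_le hk_nonneg hz
  · intro z w hdrop hzw
    simp only [sum_range_shift_add_one, add_le_iff_nonpos_right, add_lt_iff_neg_left, sub_nonpos,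
      sub_neg] at hdrop ⊢
    exact apply_add_le_apply_of_apply_add_lt hmono hanti hk_nonneg hdrop hzw

/-- Rolling sums of a unimodal function on ℤ are unimodal. -/
theorem rolling_sum_unimodal
    (f : ℤ → ℝ) (k : ℕ) (hk : 1 ≤ k)
    (m : ℤ)
    (hmono : MonotoneOn f (Set.Iic m)) (hanti : AntitoneOn f (Set.Ici m)) :
    ∃ M : ℤ,
      MonotoneOn (fun z : ℤ => ∑ i ∈ Finset.range k, f (z + i)) (Set.Iic M) ∧
      AntitoneOn (fun z : ℤ => ∑ i ∈ Finset.range k, f (z + i)) (Set.Ici M) :=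
  rolling_sum_unimodal_general f k m hmono hanti
end

section
/- With H as the simple random walk heat kernel on ℤ, for every fixed integer x, the function t ↦ H(x,t), restricted to nonnegative integers t with t ≡ x (mod 2), is unimodal, and its maximum is attained at t = x². -/
lemma choose_identity (n k : ℕ) :
    (k + 1) * (n + 1 - k) * ((n + 2).choose (k + 1)) = (n + 2) * (n + 1) * n.choose k := by
  have h1 := Nat.add_one_mul_choose_eq (n + 1) k
  have h2 := Nat.choose_mul_succ_eq n k
  calc (k + 1) * (n + 1 - k) * ((n + 2).choose (k + 1))
      = (n + 1 - k) * ((n + 2).choose (k + 1) * (k + 1)) := by ring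
    _ = (n + 1 - k) * ((n + 2) * (n + 1).choose k) := by rw [← h1]
    _ = (n + 2) * ((n + 1).choose k * (n + 1 - k)) := by ring
    _ = (n + 2) * (n.choose k * (n + 1)) := by rw [← h2]
    _ = (n + 2) * (n + 1) * n.choose k := by ring

lemma H_nonneg (x t : ℤ) : 0 ≤ H x t := by
  unfold H; split
  · positivity
  · exact le_refl 0

lemma H_vals (x t : ℤ) (ht : 0 ≤ t) (hpar : (2:ℤ) ∣ t - x) (hx : |x| ≤ t) :
    H x t = (2:ℝ) ^ (-t) * (t.toNat.choose ((t + x) / 2).toNat) ∧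
    H x (t + 2) = (2:ℝ) ^ (-t) * ((t.toNat + 2).choose (((t + x) / 2).toNat + 1)) / 4 := by
  have hx1 : -t ≤ x := by rcases abs_le.mp hx with ⟨h, _⟩; linarith
  have hx2 : x ≤ t := (abs_le.mp hx).2
  constructor
  · unfold H; rw [if_pos ⟨ht, hpar, hx⟩]
  · have hd : |x| ≤ t + 2 := by rw [abs_le]; constructor <;> linarith
    have hp2 : (2:ℤ) ∣ t + 2 - x := by omega
    unfold H; rw [if_pos ⟨by linarith, hp2, hd⟩]
    have h1 : (t + 2).toNat = t.toNat + 2 := by omega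
    have h2 : ((t + 2 + x) / 2).toNat = ((t + x) / 2).toNat + 1 := by omega
    rw [h1, h2]
    have h4 : (2:ℝ) ^ (-(2:ℤ)) = 1/4 := by norm_num
    have h3 : (2:ℝ) ^ (-(t+2)) = (2:ℝ) ^ (-t) * (1/4) := by
      rw [show -(t+2) = -t + -2 by ring, zpow_add₀ (by norm_num : (2:ℝ) ≠ 0), h4]
    rw [h3]; ring

lemma step_up (x t : ℤ) (ht : 0 ≤ t) (hpar : (2:ℤ) ∣ t - x) (h2 : t + 2 ≤ x ^ 2) :
    H x t ≤ H x (t + 2) := by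
  by_cases hx : |x| ≤ t
  · have hx1 : -t ≤ x := by rcases abs_le.mp hx with ⟨h, _⟩; linarith
    have hx2 : x ≤ t := (abs_le.mp hx).2
    obtain ⟨e1, e2⟩ := H_vals x t ht hpar hx
    rw [e1, e2]
    set n := t.toNat with hn
    set k := ((t + x) / 2).toNat with hk
    have hkt : 2 * (k:ℤ) = t + x := by omega
    have hnt : (n:ℤ) = t := by omega
    have hkn : k ≤ n := by omega
    have key : 4 * ((k + 1) * (n + 1 - k)) ≤ (n + 2) * (n + 1) := by
      zify [show k ≤ n + 1 by omega]
      nlinarith [hkt, hnt, h2]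
    have hchoose : 4 * n.choose k ≤ (n + 2).choose (k + 1) := by
      have hpos : 0 < (k + 1) * (n + 1 - k) := by
        apply Nat.mul_pos <;> omega
      have hid := choose_identity n k
      have hineq : (k + 1) * (n + 1 - k) * (4 * n.choose k)
          ≤ (k + 1) * (n + 1 - k) * ((n + 2).choose (k + 1)) := by
        rw [hid]
        calc (k + 1) * (n + 1 - k) * (4 * n.choose k)
            = 4 * ((k + 1) * (n + 1 - k)) * n.choose k := by ring
          _ ≤ (n + 2) * (n + 1) * n.choose k := Nat.mul_le_mul_right _ key
      exact Nat.le_of_mul_le_mul_left hineq hpos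
    have hpow : (0:ℝ) < (2:ℝ) ^ (-t) := by positivity
    have hc : (4:ℝ) * (n.choose k : ℝ) ≤ ((n + 2).choose (k + 1) : ℝ) := by
      exact_mod_cast hchoose
    rw [mul_div_assoc]
    exact mul_le_mul_of_nonneg_left (by linarith) (le_of_lt hpow)
  · have hz : H x t = 0 := by
      unfold H; rw [if_neg (fun h => hx h.2.2)]
    rw [hz]; exact H_nonneg x (t + 2)

lemma step_down (x t : ℤ) (hx2 : x ^ 2 ≤ t) (hpar : (2:ℤ) ∣ t - x) :
    H x (t + 2) ≤ H x t := by
  have habs : |x| ≤ t := by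
    have : |x| ≤ x ^ 2 := by nlinarith [abs_nonneg x, sq_abs x]
    linarith
  have ht : 0 ≤ t := le_trans (abs_nonneg x) habs
  have hx1 : -t ≤ x := by rcases abs_le.mp habs with ⟨h, _⟩; linarith
  have hxx : x ≤ t := (abs_le.mp habs).2
  obtain ⟨e1, e2⟩ := H_vals x t ht hpar habs
  rw [e1, e2]
  set n := t.toNat with hn
  set k := ((t + x) / 2).toNat with hk
  have hkt : 2 * (k:ℤ) = t + x := by omega
  have hnt : (n:ℤ) = t := by omega
  have hkn : k ≤ n := by omega
  have key : (n + 2) * (n + 1) ≤ 4 * ((k + 1) * (n + 1 - k)) := by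
    zify [show k ≤ n + 1 by omega]
    nlinarith [hkt, hnt, hx2]
  have hchoose : (n + 2).choose (k + 1) ≤ 4 * n.choose k := by
    have hpos : 0 < (k + 1) * (n + 1 - k) := by
      apply Nat.mul_pos <;> omega
    have hid := choose_identity n k
    have hineq : (k + 1) * (n + 1 - k) * ((n + 2).choose (k + 1))
        ≤ (k + 1) * (n + 1 - k) * (4 * n.choose k) := by
      rw [hid]
      calc (n + 2) * (n + 1) * n.choose k
          ≤ 4 * ((k + 1) * (n + 1 - k)) * n.choose k := Nat.mul_le_mul_right _ key
        _ = (k + 1) * (n + 1 - k) * (4 * n.choose k) := by ring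
    exact Nat.le_of_mul_le_mul_left hineq hpos
  have hpow : (0:ℝ) < (2:ℝ) ^ (-t) := by positivity
  have hc : ((n + 2).choose (k + 1) : ℝ) ≤ (4:ℝ) * (n.choose k : ℝ) := by
    exact_mod_cast hchoose
  rw [mul_div_assoc]
  exact mul_le_mul_of_nonneg_left (by linarith) (le_of_lt hpow)

lemma mono_up (x : ℤ) : ∀ m : ℕ, ∀ t : ℤ, 0 ≤ t → (2:ℤ) ∣ t - x → t + 2 * m ≤ x ^ 2 →
    H x t ≤ H x (t + 2 * m) := by
  intro m
  induction m with
  | zero => intro t _ _ _; simp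
  | succ p ih =>
    intro t ht hpar hle
    have h1 : H x t ≤ H x (t + 2) := step_up x t ht hpar (by push_cast at hle; linarith)
    have h2 : H x (t + 2) ≤ H x (t + 2 + 2 * p) := by
      apply ih (t + 2) (by linarith) (by omega) (by push_cast at hle ⊢; linarith)
    have : t + 2 + 2 * (p:ℤ) = t + 2 * ((p:ℤ) + 1) := by ring
    rw [this] at h2
    calc H x t ≤ H x (t + 2) := h1
      _ ≤ H x (t + 2 * ((p:ℤ) + 1)) := h2
      _ = H x (t + 2 * ((p + 1 : ℕ) : ℤ)) := by push_cast; ring_nf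

lemma mono_down (x : ℤ) : ∀ m : ℕ, ∀ t : ℤ, x ^ 2 ≤ t → (2:ℤ) ∣ t - x →
    H x (t + 2 * m) ≤ H x t := by
  intro m
  induction m with
  | zero => intro t _ _; simp
  | succ p ih =>
    intro t ht hpar
    have h1 : H x (t + 2) ≤ H x t := step_down x t ht hpar
    have h2 : H x (t + 2 + 2 * p) ≤ H x (t + 2) := ih (t + 2) (by linarith) (by omega)
    calc H x (t + 2 * ((p + 1 : ℕ) : ℤ)) = H x (t + 2 + 2 * p) := by push_cast; ring_nf
      _ ≤ H x (t + 2) := h2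
      _ ≤ H x t := h1

theorem H_unimodal_max_at_sq (x : ℤ) :
    (∀ t₁ t₂ : ℤ, 0 ≤ t₁ → t₁ ≤ t₂ → t₂ ≤ x ^ 2 →
        (2 : ℤ) ∣ (t₁ - x) → (2 : ℤ) ∣ (t₂ - x) → H x t₁ ≤ H x t₂) ∧
    (∀ t₁ t₂ : ℤ, x ^ 2 ≤ t₁ → t₁ ≤ t₂ →
        (2 : ℤ) ∣ (t₁ - x) → (2 : ℤ) ∣ (t₂ - x) → H x t₂ ≤ H x t₁) ∧
    (∀ t : ℤ, 0 ≤ t → (2 : ℤ) ∣ (t - x) → H x t ≤ H x (x ^ 2)) := by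
  have part1 : ∀ t₁ t₂ : ℤ, 0 ≤ t₁ → t₁ ≤ t₂ → t₂ ≤ x ^ 2 →
      (2 : ℤ) ∣ (t₁ - x) → (2 : ℤ) ∣ (t₂ - x) → H x t₁ ≤ H x t₂ := by
    intro t₁ t₂ h0 hle hsq hp1 hp2
    obtain ⟨m, hm⟩ : ∃ m : ℕ, t₂ = t₁ + 2 * m := ⟨((t₂ - t₁) / 2).toNat, by omega⟩
    rw [hm]
    exact mono_up x m t₁ h0 hp1 (by omega)
  have part2 : ∀ t₁ t₂ : ℤ, x ^ 2 ≤ t₁ → t₁ ≤ t₂ →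
      (2 : ℤ) ∣ (t₁ - x) → (2 : ℤ) ∣ (t₂ - x) → H x t₂ ≤ H x t₁ := by
    intro t₁ t₂ hsq hle hp1 hp2
    obtain ⟨m, hm⟩ : ∃ m : ℕ, t₂ = t₁ + 2 * m := ⟨((t₂ - t₁) / 2).toNat, by omega⟩
    rw [hm]
    exact mono_down x m t₁ hsq hp1
  refine ⟨part1, part2, ?_⟩
  intro t ht hpar
  have hpx : (2:ℤ) ∣ x ^ 2 - x := by
    have : x ^ 2 - x = x * (x - 1) := by ring
    rw [this]
    exact (Int.even_mul_pred_self x).two_dvd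
  rcases le_or_gt t (x ^ 2) with h | h
  · exact part1 t (x ^ 2) ht h le_rfl hpar hpx
  · exact part2 (x ^ 2) t le_rfl (le_of_lt h) hpx hpar
end

section
/- Define INF(y,t) = (1/2)H(y+1,t−1) − (1/2)H(y−1,t−1), where H is the simple random walk heat kernel on ℤ. For each fixed integer y < 0, the function u ↦ INF(y,u), restricted to positive integers u with u ≡ y (mod 2), is nonnegative and unimodal, and it satisfies INF(y,u) − INF(y,u+2) = ((4 + 3u − y²)/((u+2−y)(u+2+y))) · INF(y,u) for u ≥ −y, u > 2. -/
private lemma natA (m k : ℕ) (hk : k ≤ m + 1) :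
    (((m+1).choose k : ℝ)) * ((m:ℝ) + 1 - k) = ((m:ℝ) + 1) * (m.choose k) := by
  have h := Nat.choose_mul_succ_eq m k
  have h2 := congrArg (fun n : ℕ => (n : ℝ)) h
  push_cast [Nat.cast_sub hk] at h2
  linarith

private lemma natB (m k : ℕ) (hk : k ≤ m) :
    (((m+2).choose (k+1) : ℝ)) * ((k:ℝ)+1) * ((m:ℝ)+1-k) =
      ((m:ℝ)+1) * ((m:ℝ)+2) * (m.choose k) := by
  have h1 := Nat.add_one_mul_choose_eq (m+1) k
  have h2 := Nat.choose_mul_succ_eq m k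
  have h1' := congrArg (fun n : ℕ => (n : ℝ)) h1
  have h2' := congrArg (fun n : ℕ => (n : ℝ)) h2
  push_cast [Nat.cast_sub (show k ≤ m + 1 by omega)] at h1' h2'
  nlinarith [h1', h2']

private lemma INF_formula (y t : ℤ) (hy : y < 0) (ht : 0 < t) (hle : -y ≤ t)
    (hd : (2:ℤ) ∣ (t - y)) :
    ∃ m k : ℕ, t = (m : ℤ) + 1 ∧ t + y = 2 * (k : ℤ) ∧ 2 * k ≤ m ∧
      INF y t * ((t:ℝ) - y) = (2:ℝ)^(-t) * (-2*(y:ℝ)) * (m.choose k) := by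
  set m : ℕ := (t-1).toNat with hm
  set k : ℕ := ((t+y)/2).toNat with hk
  refine ⟨m, k, by omega, by omega, by omega, ?_⟩
  have h1 : H (y+1) (t-1) = (2:ℝ)^(-(t-1)) * ((m).choose k) := by
    rw [H, if_pos ⟨by omega, by omega, abs_le.mpr ⟨by omega, by omega⟩⟩,
      show t - 1 + (y + 1) = t + y by ring]
  have h2 : H y t = (2:ℝ)^(-t) * ((m+1).choose k) := by
    rw [H, if_pos ⟨by omega, by omega, abs_le.mpr ⟨by omega, by omega⟩⟩,
      show t.toNat = m + 1 by omega]
  rw [INF, if_neg (by omega), h1, h2]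
  have hpow : (2:ℝ)^(-(t-1)) = 2 * (2:ℝ)^(-t) := by
    rw [show -(t-1) = (-t) + 1 by ring, zpow_add₀ (two_ne_zero), zpow_one]; ring
  have hT : (t:ℝ) = (m:ℝ) + 1 := by exact_mod_cast congrArg (fun n : ℤ => (n:ℝ)) (show t = (m:ℤ)+1 by omega)
  have hY : (y:ℝ) = 2*(k:ℝ) - ((m:ℝ)+1) := by
    have : y = 2*(k:ℤ) - ((m:ℤ)+1) := by omega
    exact_mod_cast congrArg (fun n : ℤ => (n:ℝ)) this
  have hA := natA m k (by omega)
  rw [hpow, hT, hY]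
  linear_combination (-2*(2:ℝ)^(-t)) * hA

private lemma INF_step (y t : ℤ) (hy : y < 0) (ht : 0 < t) (hle : -y ≤ t)
    (hd : (2:ℤ) ∣ (t - y)) :
    INF y (t+2) * (((t:ℝ) + 2 - y) * ((t:ℝ) + 2 + y)) = INF y t * ((t:ℝ) * ((t:ℝ)+1)) := by
  obtain ⟨m, k, h1, h2, h3, e1⟩ := INF_formula y t hy ht hle hd
  obtain ⟨m', k', h1', h2', h3', e2⟩ := INF_formula y (t+2) hy (by omega) (by omega) (by omega)
  have hm' : m' = m + 2 := by omega
  have hk' : k' = k + 1 := by omega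
  subst hm' hk'
  push_cast at e2
  have hT : (t:ℝ) = (m:ℝ) + 1 := by exact_mod_cast congrArg (fun n : ℤ => (n:ℝ)) (show t = (m:ℤ)+1 by omega)
  have hY : (y:ℝ) = 2*(k:ℝ) - ((m:ℝ)+1) := by
    have : y = 2*(k:ℤ) - ((m:ℤ)+1) := by omega
    exact_mod_cast congrArg (fun n : ℤ => (n:ℝ)) this
  have hQ : (2:ℝ)^(-(t+2)) = (2:ℝ)^(-t) / 4 := by
    rw [show -(t+2) = (-t) + (-2) by ring, zpow_add₀ (two_ne_zero)]
    norm_num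
    ring
  rw [hQ] at e2
  have hA := natB m k (by omega)
  have hD : ((t:ℝ) - y) ≠ 0 := by
    have : (0:ℤ) < t - y := by omega
    have : (0:ℝ) < (t:ℝ) - y := by exact_mod_cast this
    linarith
  refine mul_right_cancel₀ hD ?_
  rw [hT, hY] at e1 e2 ⊢
  linear_combination ((2*(k:ℝ)+2)*(2*(m:ℝ)+2-2*(k:ℝ))) * e2
    - (((m:ℝ)+1)*((m:ℝ)+2)) * e1
    + ((2:ℝ)^(-t) * (2*(m:ℝ)+2-4*(k:ℝ))) * hA

private lemma INF_zero (y u : ℤ) (hy : y < 0) (hu : 0 < u) (hlt : u < -y) : INF y u = 0 := by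
  have h1 : H (y+1) (u-1) = 0 := by
    rw [H, if_neg]
    rintro ⟨-, -, habs⟩
    rw [abs_le] at habs; omega
  have h2 : H y u = 0 := by
    rw [H, if_neg]
    rintro ⟨-, -, habs⟩
    rw [abs_le] at habs; omega
  rw [INF, if_neg (by omega), h1, h2]; ring

private lemma INF_nonneg (y u : ℤ) (hy : y < 0) (hu : 0 < u) (hd : (2:ℤ) ∣ (u - y)) :
    0 ≤ INF y u := by
  rcases lt_or_ge u (-y) with h | h
  · rw [INF_zero y u hy hu h]
  · obtain ⟨m, k, h1, h2, h3, e⟩ := INF_formula y u hy hu h hd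
    have hD : (0:ℝ) < (u:ℝ) - y := by
      have : (0:ℤ) < u - y := by omega
      exact_mod_cast this
    have hy' : (0:ℝ) ≤ -2*(y:ℝ) := by
      have : (0:ℤ) ≤ -2*y := by omega
      exact_mod_cast this
    have hrhs : 0 ≤ (2:ℝ)^(-u) * (-2*(y:ℝ)) * (m.choose k) := by
      apply mul_nonneg (mul_nonneg (by positivity) hy') (by positivity)
    nlinarith [e, hD, hrhs]

theorem inf_nonneg_unimodal_of_neg (y : ℤ) (hy : y < 0) :
    (∀ u : ℤ, 0 < u → (2 : ℤ) ∣ (u - y) → 0 ≤ INF y u) ∧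
    (∃ m : ℤ,
      (∀ u₁ u₂ : ℤ, 0 < u₁ → u₁ ≤ u₂ → u₂ ≤ m →
        (2 : ℤ) ∣ (u₁ - y) → (2 : ℤ) ∣ (u₂ - y) → INF y u₁ ≤ INF y u₂) ∧
      (∀ u₁ u₂ : ℤ, m ≤ u₁ → u₁ ≤ u₂ →
        (2 : ℤ) ∣ (u₁ - y) → (2 : ℤ) ∣ (u₂ - y) → INF y u₂ ≤ INF y u₁)) ∧
    (∀ u : ℤ, -y ≤ u → 2 < u → (2 : ℤ) ∣ (u - y) →
      INF y u - INF y (u + 2) =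
        ((4 + 3 * (u : ℝ) - (y : ℝ) ^ 2) /
          (((u : ℝ) + 2 - (y : ℝ)) * ((u : ℝ) + 2 + (y : ℝ)))) * INF y u) := by
  refine ⟨fun u hu hd => INF_nonneg y u hy hu hd, ?_, ?_⟩
  · -- unimodality
    have key : ∀ Y : ℤ, ∃ t₀ : ℤ, (2:ℤ) ∣ (t₀ - y) ∧ Y - 4 ≤ 3*t₀ ∧ 3*t₀ ≤ Y + 2 :=
      fun Y => ⟨y + 2*((Y + 1 - 3*y)/6), by omega, by omega, by omega⟩
    obtain ⟨t₀, hpar, hlo, hhi⟩ := key (y^2)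
    refine ⟨max (-y) t₀, ?_, ?_⟩
    all_goals {
      have hmy : -y ≤ max (-y) t₀ := le_max_left _ _
      have hmt : t₀ ≤ max (-y) t₀ := le_max_right _ _
      have step_down : ∀ t : ℤ, max (-y) t₀ ≤ t → (2:ℤ) ∣ (t - y) → INF y (t+2) ≤ INF y t := by
        intro t hmtle hdt
        have hlet : -y ≤ t := le_trans hmy hmtle
        have ht : 0 < t := by omega
        have hstep := INF_step y t hy ht hlet hdt
        have hy2 : (y:ℝ)^2 ≤ 3*(t:ℝ) + 4 := by
          have h3 : y^2 ≤ 3*t + 4 := by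
            have ht0 : t₀ ≤ t := le_trans hmt hmtle
            linarith
          exact_mod_cast h3
        have hI := INF_nonneg y t hy ht hdt
        have ha : (0:ℝ) < (t:ℝ) + 2 - y := by
          have : (0:ℤ) < t + 2 - y := by omega
          exact_mod_cast this
        have hb : (0:ℝ) < (t:ℝ) + 2 + y := by
          have : (0:ℤ) < t + 2 + y := by omega
          exact_mod_cast this
        have hDpos : (0:ℝ) < ((t:ℝ)+2-y)*((t:ℝ)+2+y) := mul_pos ha hb
        have h4 : (t:ℝ)*((t:ℝ)+1) ≤ ((t:ℝ)+2-y)*((t:ℝ)+2+y) := by nlinarith [hy2]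
        have h5 : INF y (t+2) * (((t:ℝ)+2-y)*((t:ℝ)+2+y)) ≤ INF y t * (((t:ℝ)+2-y)*((t:ℝ)+2+y)) := by
          rw [hstep]
          exact mul_le_mul_of_nonneg_left h4 hI
        exact le_of_mul_le_mul_right h5 hDpos
      have step_up : ∀ t : ℤ, 0 < t → (2:ℤ) ∣ (t - y) → t + 2 ≤ max (-y) t₀ →
          INF y t ≤ INF y (t+2) := by
        intro t ht hdt hlem
        rcases lt_or_ge t (-y) with hcase | hcase
        · rw [INF_zero y t hy ht hcase]
          exact INF_nonneg y (t+2) hy (by omega) (by omega)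
        · have hmmax : max (-y) t₀ = t₀ := by
            rcases max_cases (-y) t₀ with ⟨h', h''⟩ | ⟨h', h''⟩
            · omega
            · exact h'
          have htt0 : t + 2 ≤ t₀ := by rw [hmmax] at hlem; exact hlem
          have hstep := INF_step y t hy ht hcase hdt
          have hy2 : 3*(t:ℝ) + 4 ≤ (y:ℝ)^2 := by
            have h3 : 3*t + 4 ≤ y^2 := by linarith
            exact_mod_cast h3
          have hI := INF_nonneg y t hy ht hdt
          have ha : (0:ℝ) < (t:ℝ) + 2 - y := by
            have : (0:ℤ) < t + 2 - y := by omega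
            exact_mod_cast this
          have hb : (0:ℝ) < (t:ℝ) + 2 + y := by
            have : (0:ℤ) < t + 2 + y := by omega
            exact_mod_cast this
          have hDpos : (0:ℝ) < ((t:ℝ)+2-y)*((t:ℝ)+2+y) := mul_pos ha hb
          have h4 : ((t:ℝ)+2-y)*((t:ℝ)+2+y) ≤ (t:ℝ)*((t:ℝ)+1) := by nlinarith [hy2]
          have h5 : INF y t * (((t:ℝ)+2-y)*((t:ℝ)+2+y)) ≤ INF y (t+2) * (((t:ℝ)+2-y)*((t:ℝ)+2+y)) := by
            rw [hstep]
            exact mul_le_mul_of_nonneg_left h4 hI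
          exact le_of_mul_le_mul_right h5 hDpos
      first
      | · -- increasing part
          have up_chain : ∀ j : ℕ, ∀ u : ℤ, 0 < u → (2:ℤ) ∣ (u - y) →
              u + 2*(j:ℤ) ≤ max (-y) t₀ → INF y u ≤ INF y (u + 2*(j:ℤ)) := by
            intro j
            induction j with
            | zero => intro u _ _ _; norm_num
            | succ n ih =>
              intro u hu hd hle
              have hc : ((n:ℤ)+1) = ((n+1 : ℕ) : ℤ) := by push_cast; ring
              have h1 : INF y u ≤ INF y (u+2) := step_up u hu hd (by push_cast at hle ⊢; omega)
              have h2 : INF y (u+2) ≤ INF y ((u+2) + 2*(n:ℤ)) :=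
                ih (u+2) (by omega) (by omega) (by push_cast at hle ⊢; omega)
              have : u + 2*((n+1:ℕ):ℤ) = (u+2) + 2*(n:ℤ) := by push_cast; ring
              rw [this]
              exact le_trans h1 h2
          intro u₁ u₂ h0 h12 h2m hd1 hd2
          obtain ⟨j, hj⟩ : ∃ j : ℕ, u₂ = u₁ + 2*(j:ℤ) := ⟨((u₂ - u₁)/2).toNat, by omega⟩
          rw [hj]
          exact up_chain j u₁ h0 hd1 (by omega)
      | · -- decreasing part
          have down_chain : ∀ j : ℕ, ∀ u : ℤ, max (-y) t₀ ≤ u → (2:ℤ) ∣ (u - y) →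
              INF y (u + 2*(j:ℤ)) ≤ INF y u := by
            intro j
            induction j with
            | zero => intro u _ _; norm_num
            | succ n ih =>
              intro u hu hd
              have h1 : INF y ((u+2) + 2*(n:ℤ)) ≤ INF y (u+2) := ih (u+2) (by omega) (by omega)
              have h2 : INF y (u+2) ≤ INF y u := step_down u hu hd
              have : u + 2*((n+1:ℕ):ℤ) = (u+2) + 2*(n:ℤ) := by push_cast; ring
              rw [this]
              exact le_trans h1 h2
          intro u₁ u₂ h1m h12 hd1 hd2
          obtain ⟨j, hj⟩ : ∃ j : ℕ, u₂ = u₁ + 2*(j:ℤ) := ⟨((u₂ - u₁)/2).toNat, by omega⟩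
          rw [hj]
          exact down_chain j u₁ h1m hd1
    }
  · -- ratio identity
    intro u hle hu2 hd
    have hstep := INF_step y u hy (by omega) hle hd
    have ha : ((u:ℝ) + 2 - y) ≠ 0 := by
      have : (0:ℤ) < u + 2 - y := by omega
      have : (0:ℝ) < (u:ℝ) + 2 - y := by exact_mod_cast this
      linarith
    have hb : ((u:ℝ) + 2 + y) ≠ 0 := by
      have : (0:ℤ) < u + 2 + y := by omega
      have : (0:ℝ) < (u:ℝ) + 2 + y := by exact_mod_cast this
      linarith
    field_simp
    linear_combination -hstep
end

section
/- There exists a constant C > 0 such that for every integer y ≥ 1, |INF(y, t_max(y))| ≤ C·y^{-2}, where t_max(y) = ⌊(y²−4)/3⌋ + 2. -/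
theorem Nat.centralBinom_sq_mul_le (m : ℕ) : m.centralBinom ^ 2 * (2 * m + 1) ≤ 16 ^ m := by
  induction m with
  | zero => simp
  | succ m ih =>
    refine Nat.le_of_mul_le_mul_left (c := (m + 1) ^ 2) ?_ (by positivity)
    calc (m + 1) ^ 2 * ((m + 1).centralBinom ^ 2 * (2 * (m + 1) + 1))
        = ((m + 1) * (m + 1).centralBinom) ^ 2 * (2 * m + 3) := by ring
      _ = 4 * (2 * m + 1) * (2 * m + 3) * (m.centralBinom ^ 2 * (2 * m + 1)) := by
          rw [Nat.succ_mul_centralBinom_succ]; ring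
      _ ≤ 4 * (2 * m + 2) ^ 2 * 16 ^ m := Nat.mul_le_mul (by nlinarith) ih
      _ = (m + 1) ^ 2 * 16 ^ (m + 1) := by ring

theorem Nat.choose_half_sq_mul_le (n : ℕ) : n.choose (n / 2) ^ 2 * n ≤ 4 ^ n := by
  rcases Nat.even_or_odd' n with ⟨m, rfl | rfl⟩
  · rw [Nat.mul_div_cancel_left m two_pos, ← Nat.centralBinom_eq_two_mul_choose, pow_mul]
    exact (Nat.mul_le_mul_left _ (by omega)).trans (Nat.centralBinom_sq_mul_le m)
  · have hcentral : (m + 1).centralBinom = 2 * (2 * m + 1).choose m := by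
      rw [Nat.centralBinom_eq_two_mul_choose, show 2 * (m + 1) = 2 * m + 1 + 1 by ring,
        Nat.choose_succ_succ', Nat.choose_symm_half]
      ring
    rw [show (2 * m + 1) / 2 = m by omega]
    refine Nat.le_of_mul_le_mul_left (c := 4) ?_ (by norm_num)
    calc 4 * ((2 * m + 1).choose m ^ 2 * (2 * m + 1))
        ≤ (2 * (2 * m + 1).choose m) ^ 2 * (2 * (m + 1) + 1) := by nlinarith
      _ ≤ 16 ^ (m + 1) := hcentral ▸ Nat.centralBinom_sq_mul_le (m + 1)
      _ = 4 * 4 ^ (2 * m + 1) := by rw [show (16 : ℕ) = 4 ^ 2 by norm_num, ← pow_mul]; ring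

theorem H_two_mul_sub (n k : ℕ) : H (2 * k - n) n = n.choose k / 2 ^ n := by
  rcases le_or_gt k n with hk | hk
  · rw [H, if_pos ⟨by omega, ⟨n - k, by ring⟩, abs_le.2 ⟨by omega, by omega⟩⟩,
      show ((n + (2 * k - n)) / 2 : ℤ) = k by omega, Int.toNat_natCast, Int.toNat_natCast,
      zpow_neg, zpow_natCast, div_eq_inv_mul]
  · rw [Nat.choose_eq_zero_of_lt hk, H, if_neg (by rw [abs_le]; omega)]
    simp

theorem exists_of_H_ne_zero {x t : ℤ} (h : H x t ≠ 0) : ∃ n k : ℕ, t = n ∧ x = 2 * k - n := by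
  have hsupp : 0 ≤ t ∧ 2 ∣ t - x ∧ |x| ≤ t := by
    by_contra hc
    exact h (if_neg hc)
  obtain ⟨ht, ⟨c, hc⟩, hx⟩ := hsupp
  rw [abs_le] at hx
  exact ⟨t.toNat, (t - c).toNat, by omega, by omega⟩

theorem H_sq_mul_le_one (x t : ℤ) : H x t ^ 2 * t ≤ 1 := by
  by_cases h : H x t = 0
  · simp [h]
  obtain ⟨n, k, rfl, rfl⟩ := exists_of_H_ne_zero h
  have hmid : (n.choose k : ℝ) ^ 2 * n ≤ 4 ^ n := by
    exact_mod_cast (Nat.mul_le_mul_right n (Nat.pow_le_pow_left (Nat.choose_le_middle k n) 2)).trans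
      (Nat.choose_half_sq_mul_le n)
  rw [H_two_mul_sub, div_pow, ← pow_mul, mul_comm n 2, pow_mul, Int.cast_natCast,
    div_mul_eq_mul_div, div_le_one (by positivity)]
  norm_num [hmid]

theorem H_succ_pred (x t : ℤ) (ht : 1 ≤ t) : t * H (x + 1) (t - 1) = (t - x) * H x t := by
  by_cases hwalk : ∃ n k : ℕ, t = n + 1 ∧ x = 2 * k - (n + 1)
  · obtain ⟨n, k, rfl, rfl⟩ := hwalk
    rw [show (2 * k - (n + 1) + 1 : ℤ) = 2 * k - n by ring, add_sub_cancel_right, H_two_mul_sub,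
      show ((n : ℤ) + 1) = ((n + 1 : ℕ) : ℤ) by push_cast; ring, H_two_mul_sub]
    rcases le_or_gt k (n + 1) with hk | hk
    · have hpascal : (n.choose k : ℝ) * (n + 1) = (n + 1).choose k * (n + 1 - k) := by
        have h := congrArg (Nat.cast (R := ℝ)) (Nat.choose_mul_succ_eq n k)
        push_cast [hk] at h
        exact h
      push_cast
      rw [pow_succ]
      field_simp
      linear_combination 2 * hpascal
    · simp [Nat.choose_eq_zero_of_lt hk, Nat.choose_eq_zero_of_lt (Nat.lt_of_succ_lt hk)]
  · have hzero : H x t = 0 := by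
      by_contra h
      obtain ⟨n, k, rfl, rfl⟩ := exists_of_H_ne_zero h
      exact hwalk ⟨n - 1, k, by omega, by omega⟩
    have hzero' : H (x + 1) (t - 1) = 0 := by
      by_contra h
      obtain ⟨n, k, hn, hk⟩ := exists_of_H_ne_zero h
      exact hwalk ⟨n, k, by omega, by omega⟩
    rw [hzero, hzero', mul_zero, mul_zero]

theorem INF_eq_neg_div_mul_H (y t : ℤ) (ht : 1 ≤ t) : INF y t = -(y / t) * H y t := by
  have hpred := H_succ_pred y t ht
  have ht' : (t : ℝ) ≠ 0 := by exact_mod_cast (by omega : t ≠ 0)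
  rw [INF, if_neg (by omega)]
  field_simp
  linear_combination hpred

theorem INF_sq_mul_pow_three_le (y t : ℤ) (ht : 1 ≤ t) : INF y t ^ 2 * t ^ 3 ≤ y ^ 2 := by
  have ht' : (t : ℝ) ≠ 0 := by exact_mod_cast (by omega : t ≠ 0)
  calc INF y t ^ 2 * (t : ℝ) ^ 3 = (y : ℝ) ^ 2 * (H y t ^ 2 * t) := by
        rw [INF_eq_neg_div_mul_H y t ht]; field_simp
    _ ≤ (y : ℝ) ^ 2 * 1 := by gcongr; exact H_sq_mul_le_one y t
    _ = (y : ℝ) ^ 2 := mul_one _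

theorem abs_INF_le_of_sq_le_three_mul {y t : ℤ} (hy : y ≠ 0) (hyt : y ^ 2 ≤ 3 * t) :
    |INF y t| ≤ 6 / (y : ℝ) ^ 2 := by
  have ht : 1 ≤ t := by nlinarith [sq_pos_of_ne_zero hy]
  have hy' : (0 : ℝ) < (y : ℝ) ^ 2 := by positivity
  have hyt' : ((y : ℝ) ^ 2) ^ 3 ≤ 27 * (t : ℝ) ^ 3 :=
    (pow_le_pow_left₀ hy'.le (by exact_mod_cast hyt : (y : ℝ) ^ 2 ≤ 3 * t) 3).trans_eq (by ring)
  have hINF := INF_sq_mul_pow_three_le y t ht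
  have key : INF y t ^ 2 * ((y : ℝ) ^ 2) ^ 2 * (y : ℝ) ^ 2 ≤ 6 ^ 2 * (y : ℝ) ^ 2 :=
    calc INF y t ^ 2 * ((y : ℝ) ^ 2) ^ 2 * (y : ℝ) ^ 2 = INF y t ^ 2 * ((y : ℝ) ^ 2) ^ 3 := by ring
      _ ≤ INF y t ^ 2 * (27 * (t : ℝ) ^ 3) := by gcongr
      _ = 27 * (INF y t ^ 2 * (t : ℝ) ^ 3) := by ring
      _ ≤ 27 * (y : ℝ) ^ 2 := by gcongr
      _ ≤ 6 ^ 2 * (y : ℝ) ^ 2 := by gcongr; norm_num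
  refine abs_le_of_sq_le_sq ?_ (by positivity)
  rw [div_pow, le_div_iff₀ (by positivity)]
  exact le_of_mul_le_mul_right key hy'

theorem sq_le_three_mul_tmax (y : ℤ) : y ^ 2 ≤ 3 * tmax y := by
  have hdiv := Int.mul_fdiv_add_fmod (y ^ 2 - 4) 3
  have hmod := Int.fmod_lt_of_pos (y ^ 2 - 4) (by norm_num : (0 : ℤ) < 3)
  rw [tmax]
  omega

theorem inf_tmax_upper :
    ∃ C : ℝ, 0 < C ∧ ∀ y : ℤ, 1 ≤ y →
      |INF y (tmax y)| ≤ C / (y : ℝ) ^ 2 :=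
  ⟨6, by norm_num, fun y hy => abs_INF_le_of_sq_le_three_mul (by omega) (sq_le_three_mul_tmax y)⟩
end

section
/- For a simple symmetric random walk on ℤ started at 0 and a positive integer x, the expected number of visits to x−1 strictly before the first visit to x equals 2. -/
/-!
Call a ±1 path *surviving* if it never visits `x` after time `0`, let `a t` be the number of
surviving paths of length `t` ending at `x - 1`, and `T n` the number of surviving paths of
length `n`. By independence, the probability of the event counted at time `t` is `a t / 2 ^ t`.
A surviving path has two extensions, and only the one from `x - 1` upwards dies, so
`T (n + 1) = 2 T n - a n`, i.e. `∑ t < n, a t / 2 ^ t = 2 - 2 T n / 2 ^ n`. By the reflection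
principle `T n` is at most the number of unrestricted paths ending in `(-x, x]`, which is at most
`2 x` times the central binomial coefficient `C(n, n / 2) = O(2 ^ n / √n)`; hence `T n / 2 ^ n → 0`.
-/

open Finset Filter Topology

namespace SimpleRandomWalk

theorem sum_Icc_add_right {M : Type*} [AddCommMonoid M] (f : ℤ → M) (a b c : ℤ) :
    ∑ y ∈ Icc a b, f (y + c) = ∑ z ∈ Icc (a + c) (b + c), f z := by
  rw [← map_add_right_Icc, sum_map]
  rfl

def pathCount : ℕ → ℤ → ℕ
  | 0, y => if y = 0 then 1 else 0
  | t + 1, y => pathCount t (y - 1) + pathCount t (y + 1)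

-- `x` is avoided at times `1, …, t` only: at time `0` the path sits at `0` even if `x = 0`.
def avoidCount (x : ℤ) : ℕ → ℤ → ℕ
  | 0, y => if y = 0 then 1 else 0
  | t + 1, y => if y = x then 0 else avoidCount x t (y - 1) + avoidCount x t (y + 1)

theorem pathCount_neg (t : ℕ) (y : ℤ) : pathCount t (-y) = pathCount t y := by
  induction t generalizing y with
  | zero => simp [pathCount]
  | succ t ih =>
    rw [pathCount, pathCount, ← ih (y + 1), ← ih (y - 1)]
    rw [add_comm]; congr 2 <;> ring

theorem exists_eq_of_pathCount_ne_zero {t : ℕ} {y : ℤ} (h : pathCount t y ≠ 0) :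
    ∃ k ≤ t, y = 2 * k - t := by
  induction t generalizing y with
  | zero => exact ⟨0, le_rfl, by simpa [pathCount] using h⟩
  | succ t ih =>
    rw [pathCount] at h
    rcases (show pathCount t (y - 1) ≠ 0 ∨ pathCount t (y + 1) ≠ 0 by omega) with h | h
    · obtain ⟨k, hk, hy⟩ := ih h
      exact ⟨k + 1, by omega, by push_cast; omega⟩
    · obtain ⟨k, hk, hy⟩ := ih h
      exact ⟨k, by omega, by push_cast; omega⟩

theorem pathCount_eq_zero_of_lt_abs {t : ℕ} {y : ℤ} (h : (t : ℤ) < |y|) : pathCount t y = 0 := by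
  by_contra hne
  obtain ⟨k, hk, rfl⟩ := exists_eq_of_pathCount_ne_zero hne
  rcases lt_abs.1 h with h | h <;> omega

theorem pathCount_two_mul_sub (t k : ℕ) : pathCount t (2 * k - t) = t.choose k := by
  induction t generalizing k with
  | zero => cases k <;> simp [pathCount]; omega
  | succ t ih =>
    rw [pathCount]
    cases k with
    | zero =>
      rw [pathCount_eq_zero_of_lt_abs (by rw [abs_of_neg (by omega)]; push_cast; omega)]
      simpa using ih 0
    | succ k =>
      rw [Nat.choose_succ_succ, ← ih k, ← ih (k + 1)]
      congr 2 <;> push_cast <;> ring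

theorem pathCount_le_choose_half (t : ℕ) (y : ℤ) : pathCount t y ≤ t.choose (t / 2) := by
  by_cases h : pathCount t y = 0
  · simp [h]
  obtain ⟨k, -, rfl⟩ := exists_eq_of_pathCount_ne_zero h
  rw [pathCount_two_mul_sub]
  exact Nat.choose_le_middle k t

variable {x : ℤ}

theorem avoidCount_self (hx : x ≠ 0) (t : ℕ) : avoidCount x t x = 0 := by
  cases t <;> simp [avoidCount, hx]

theorem avoidCount_eq_zero_of_lt (hx : 0 < x) {y : ℤ} (hy : x < y) (t : ℕ) :
    avoidCount x t y = 0 := by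
  induction t generalizing y with
  | zero => simp [avoidCount]; omega
  | succ t ih =>
    rw [avoidCount, if_neg hy.ne', ih (y := y + 1) (by omega)]
    rcases (show x = y - 1 ∨ x < y - 1 by omega) with h | h
    · rw [← h, avoidCount_self hx.ne']
    · rw [ih h]

theorem avoidCount_le_pathCount (t : ℕ) (y : ℤ) : avoidCount x t y ≤ pathCount t y := by
  induction t generalizing y with
  | zero => simp [avoidCount, pathCount]
  | succ t ih =>
    rw [avoidCount, pathCount]
    split_ifs
    · exact Nat.zero_le _
    · exact add_le_add (ih _) (ih _)

theorem avoidCount_add_pathCount_reflect (hx : 0 < x) (t : ℕ) {y : ℤ} (hy : y ≤ x) :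
    avoidCount x t y + pathCount t (2 * x - y) = pathCount t y := by
  induction t generalizing y with
  | zero => simp [avoidCount, pathCount]; omega
  | succ t ih =>
    rcases hy.eq_or_lt with rfl | hy
    · simp [avoidCount, two_mul]
    rw [avoidCount, if_neg hy.ne, pathCount, pathCount, ← ih (y := y - 1) (by omega),
      ← ih (y := y + 1) (by omega)]
    rw [show 2 * x - y - 1 = 2 * x - (y + 1) by ring, show 2 * x - y + 1 = 2 * x - (y - 1) by ring]
    ring

theorem avoidCount_eq_zero_of_lt_neg {t : ℕ} {y : ℤ} (hy : y < -t) : avoidCount x t y = 0 :=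
  Nat.eq_zero_of_le_zero <| (avoidCount_le_pathCount t y).trans_eq <|
    pathCount_eq_zero_of_lt_abs (by rw [abs_of_neg (by omega)]; omega)

-- For `0 < x`, surviving paths of length `n` end in `[-n, x]`.
noncomputable def survivorCount (x : ℤ) (n : ℕ) : ℕ := ∑ y ∈ Icc (-(n : ℤ)) x, avoidCount x n y

theorem sum_avoidCount_of_subset (hx : 0 < x) {n : ℕ} {s : Finset ℤ} (hs : Icc (-(n : ℤ)) x ⊆ s) :
    ∑ y ∈ s, avoidCount x n y = survivorCount x n := by
  refine (sum_subset hs fun y _ hy => ?_).symm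
  rw [mem_Icc, not_and_or, not_le, not_le] at hy
  rcases hy with hy | hy
  · exact avoidCount_eq_zero_of_lt_neg hy
  · exact avoidCount_eq_zero_of_lt hx hy n

theorem survivorCount_succ_add (hx : 0 < x) (n : ℕ) :
    survivorCount x (n + 1) + avoidCount x n (x - 1) = 2 * survivorCount x n := by
  set W := Icc (-(n : ℤ) - 1) (x + 1)
  have hstep : ∀ y, avoidCount x (n + 1) y + (if y = x then avoidCount x n (x - 1) else 0) =
      avoidCount x n (y - 1) + avoidCount x n (y + 1) := by
    intro y
    rw [avoidCount]
    split_ifs with h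
    · rw [h, avoidCount_eq_zero_of_lt hx (lt_add_one x), zero_add, add_zero]
    · rfl
  have hsum := sum_congr rfl fun y (_ : y ∈ W) => hstep y
  rw [sum_add_distrib, sum_add_distrib, sum_ite_eq', if_pos (by simp [W]; omega),
    sum_avoidCount_of_subset hx (by intro y; simp [W]; omega)] at hsum
  rw [hsum, two_mul]
  congr 1
  · simp_rw [W, sub_eq_add_neg, sum_Icc_add_right]
    exact sum_avoidCount_of_subset hx (by intro y; simp; omega)
  · rw [sum_Icc_add_right]
    exact sum_avoidCount_of_subset hx (by intro y; simp; omega)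

theorem survivorCount_le_sum_pathCount (hx : 0 < x) (n : ℕ) :
    survivorCount x n ≤ ∑ y ∈ Ioc (-x) x, pathCount n y := by
  have hreflect : survivorCount x n + ∑ y ∈ Icc (-(n : ℤ)) x, pathCount n (2 * x - y) =
      ∑ y ∈ Icc (-(n : ℤ)) x, pathCount n y := by
    rw [survivorCount, ← sum_add_distrib]
    exact sum_congr rfl fun y hy => avoidCount_add_pathCount_reflect hx n (mem_Icc.1 hy).2
  have hmirror : ∑ y ∈ Icc (-(n : ℤ)) (-x), pathCount n y ≤
      ∑ y ∈ Icc (-(n : ℤ)) x, pathCount n (2 * x - y) := calc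
    ∑ y ∈ Icc (-(n : ℤ)) (-x), pathCount n y
        = ∑ y ∈ Icc (2 * x - n) x, pathCount n (2 * x - y) := by
      simp_rw [← pathCount_neg n (2 * x - _), neg_sub, sub_eq_add_neg, sum_Icc_add_right]
      congr 2 <;> ring
    _ ≤ ∑ y ∈ Icc (-(n : ℤ)) x, pathCount n (2 * x - y) :=
      sum_le_sum_of_subset (Icc_subset_Icc (by omega) le_rfl)
  have hsplit : ∑ y ∈ Icc (-(n : ℤ)) x, pathCount n y ≤
      ∑ y ∈ Icc (-(n : ℤ)) (-x), pathCount n y + ∑ y ∈ Ioc (-x) x, pathCount n y := by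
    rw [← sum_union (disjoint_left.2 fun y h1 h2 => by simp at h1 h2; omega)]
    exact sum_le_sum_of_subset fun y hy => by simp at hy ⊢; omega
  omega

theorem survivorCount_le (hx : 0 < x) (n : ℕ) :
    (survivorCount x n : ℝ) ≤ 2 * x * n.choose (n / 2) := by
  have h := (survivorCount_le_sum_pathCount hx n).trans
    (sum_le_sum fun y _ => pathCount_le_choose_half n y)
  rw [sum_const, Int.card_Ioc, smul_eq_mul] at h
  calc (survivorCount x n : ℝ) ≤ ((x - -x).toNat * n.choose (n / 2) : ℕ) := by exact_mod_cast h
    _ = 2 * x * n.choose (n / 2) := by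
      rw [Nat.cast_mul, ← Int.cast_natCast, Int.toNat_of_nonneg (by omega)]
      push_cast
      ring

theorem succ_mul_centralBinom_sq_le (m : ℕ) : (m + 1) * m.centralBinom ^ 2 ≤ 16 ^ m := by
  induction m with
  | zero => simp
  | succ m ih =>
    have hrec := Nat.succ_mul_centralBinom_succ m
    refine Nat.le_of_mul_le_mul_left ?_ (show 0 < (m + 1) ^ 2 by positivity)
    calc (m + 1) ^ 2 * ((m + 2) * (m + 1).centralBinom ^ 2)
        = (m + 2) * (2 * (2 * m + 1)) ^ 2 * m.centralBinom ^ 2 := by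
          rw [show (m + 1) ^ 2 * ((m + 2) * (m + 1).centralBinom ^ 2) =
            (m + 2) * ((m + 1) * (m + 1).centralBinom) ^ 2 by ring, hrec]
          ring
      _ ≤ 16 * (m + 1) ^ 3 * m.centralBinom ^ 2 := Nat.mul_le_mul_right _ (by nlinarith)
      _ = 16 * (m + 1) ^ 2 * ((m + 1) * m.centralBinom ^ 2) := by ring
      _ ≤ 16 * (m + 1) ^ 2 * 16 ^ m := Nat.mul_le_mul_left _ ih
      _ = (m + 1) ^ 2 * 16 ^ (m + 1) := by ring

theorem succ_mul_choose_half_sq_le (n : ℕ) : (n + 1) * n.choose (n / 2) ^ 2 ≤ 2 * 4 ^ n := by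
  obtain ⟨m, rfl | rfl⟩ := n.even_or_odd'
  · have h := succ_mul_centralBinom_sq_le m
    rw [Nat.centralBinom_eq_two_mul_choose] at h
    rw [Nat.mul_div_cancel_left m two_pos, pow_mul]
    norm_num
    nlinarith
  · have h := succ_mul_centralBinom_sq_le (m + 1)
    rw [Nat.centralBinom_eq_two_mul_choose, show 2 * (m + 1) = 2 * m + 1 + 1 by ring,
      Nat.choose_succ_succ, Nat.choose_symm_half, pow_succ 16] at h
    have h4 : 4 ^ (2 * m + 1) = 4 * 16 ^ m := by rw [pow_succ, pow_mul]; norm_num; ring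
    rw [show (2 * m + 1) / 2 = m by omega, h4]
    nlinarith [Nat.mul_le_mul_right ((2 * m + 1).choose m ^ 2) (show m + 1 ≤ m + 1 + 1 by omega)]

theorem tendsto_choose_half_div_two_pow :
    Tendsto (fun n : ℕ => (n.choose (n / 2) : ℝ) / 2 ^ n) atTop (𝓝 0) := by
  have hbound (n : ℕ) : (n.choose (n / 2) : ℝ) / 2 ^ n ≤ √(2 / (n + 1)) := by
    rw [Real.le_sqrt (by positivity) (by positivity), div_pow, ← pow_mul, mul_comm, pow_mul,
      div_le_div_iff₀ (by positivity) (by positivity)]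
    have h : ((n + 1) * n.choose (n / 2) ^ 2 : ℝ) ≤ 2 * 4 ^ n := by
      exact_mod_cast succ_mul_choose_half_sq_le n
    norm_num
    linarith
  have hsqrt := (tendsto_one_div_add_atTop_nhds_zero_nat.const_mul 2).sqrt
  rw [mul_zero, Real.sqrt_zero] at hsqrt
  simp only [mul_one_div] at hsqrt
  exact squeeze_zero (fun n => by positivity) hbound hsqrt

theorem sum_range_avoidCount_div_pow_add (hx : 0 < x) (n : ℕ) :
    ∑ t ∈ range n, (avoidCount x t (x - 1) : ℝ) / 2 ^ t + 2 * survivorCount x n / 2 ^ n = 2 := by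
  induction n with
  | zero => simp [survivorCount, avoidCount, hx.le]
  | succ n ih =>
    have hrec : (survivorCount x (n + 1) : ℝ) = 2 * survivorCount x n - avoidCount x n (x - 1) := by
      rw [eq_sub_iff_add_eq]
      exact_mod_cast survivorCount_succ_add hx n
    have hhalve : 2 * (2 * survivorCount x n - avoidCount x n (x - 1) : ℝ) / 2 ^ (n + 1) =
        2 * survivorCount x n / 2 ^ n - avoidCount x n (x - 1) / 2 ^ n := by
      rw [pow_succ]
      field_simp
    rw [sum_range_succ, hrec, hhalve]
    linarith

theorem tendsto_survivorCount_div_pow (hx : 0 < x) :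
    Tendsto (fun n : ℕ => (survivorCount x n : ℝ) / 2 ^ n) atTop (𝓝 0) := by
  have hbound (n : ℕ) :
      (survivorCount x n : ℝ) / 2 ^ n ≤ 2 * x * ((n.choose (n / 2) : ℝ) / 2 ^ n) := by
    rw [← mul_div_assoc]
    gcongr
    exact survivorCount_le hx n
  have hlim := tendsto_choose_half_div_two_pow.const_mul (2 * (x : ℝ))
  rw [mul_zero] at hlim
  exact squeeze_zero (fun n => by positivity) hbound hlim

theorem hasSum_avoidCount_div_pow (hx : 0 < x) :
    HasSum (fun t : ℕ => (avoidCount x t (x - 1) : ℝ) / 2 ^ t) 2 := by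
  rw [hasSum_iff_tendsto_nat_of_nonneg fun t => by positivity]
  have hpartial (n : ℕ) : ∑ t ∈ range n, (avoidCount x t (x - 1) : ℝ) / 2 ^ t =
      2 - 2 * ((survivorCount x n : ℝ) / 2 ^ n) := by
    linarith [sum_range_avoidCount_div_pow_add hx n,
      mul_div_assoc 2 (survivorCount x n : ℝ) (2 ^ n)]
  simp_rw [hpartial]
  simpa using (tendsto_survivorCount_div_pow hx).const_mul 2 |>.const_sub 2

section Probability

open MeasureTheory ProbabilityTheory

variable {Ω : Type*} {X : ℕ → Ω → ℤ}

def avoidEvent (X : ℕ → Ω → ℤ) (x : ℤ) (t : ℕ) (y : ℤ) : Set Ω :=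
  {ω | (∑ i ∈ range t, X i ω) = y ∧ ∀ s ≤ t, (∑ i ∈ range s, X i ω) ≠ x}

theorem avoidEvent_self (t : ℕ) : avoidEvent X x t x = ∅ :=
  Set.eq_empty_of_forall_notMem fun _ hω => hω.2 t le_rfl hω.1

theorem avoidEvent_succ_inter {y : ℤ} (hy : y ≠ x) (t : ℕ) (c : ℤ) :
    avoidEvent X x (t + 1) y ∩ {ω | X t ω = c} = avoidEvent X x t (y - c) ∩ {ω | X t ω = c} := by
  ext ω
  simp only [avoidEvent, Set.mem_inter_iff, Set.mem_ofPred_eq, sum_range_succ]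
  constructor
  · rintro ⟨⟨hsum, havoid⟩, hc⟩
    exact ⟨⟨by omega, fun s hs => havoid s (by omega)⟩, hc⟩
  · rintro ⟨⟨hsum, havoid⟩, hc⟩
    refine ⟨⟨by omega, fun s hs => ?_⟩, hc⟩
    rcases Nat.le_succ_iff.1 hs with hs | rfl
    · exact havoid s hs
    · rw [sum_range_succ]; omega

theorem measurableSet_avoidEvent (x : ℤ) (t : ℕ) (y : ℤ) :
    MeasurableSet[⨆ i ∈ Set.Iio t, MeasurableSpace.comap (X i) inferInstance]
      (avoidEvent X x t y) := by
  have hS : ∀ s ≤ t, Measurable[⨆ i ∈ Set.Iio t, MeasurableSpace.comap (X i) inferInstance]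
      fun ω => ∑ i ∈ range s, X i ω := fun s hs =>
    Finset.measurable_sum _ fun i hi =>
      (comap_measurable (X i)).mono (le_iSup₂ (f := fun i _ => MeasurableSpace.comap (X i) _) i
        (by simp at hi ⊢; omega)) le_rfl
  have hset : avoidEvent X x t y = (fun ω => ∑ i ∈ range t, X i ω) ⁻¹' {y} ∩
      ⋂ s, ⋂ (_ : s ≤ t), ((fun ω => ∑ i ∈ range s, X i ω) ⁻¹' {x})ᶜ := by
    ext ω
    simp [avoidEvent]
  rw [hset]
  exact (hS t le_rfl (measurableSet_singleton y)).inter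
    (.iInter fun s => .iInter fun hs => (hS s hs (measurableSet_singleton x)).compl)

variable [MeasurableSpace Ω] {μ : Measure Ω}

theorem measure_eq_inter_add_inter {A B E : Set Ω} (hE : MeasurableSet E) (hB : MeasurableSet B)
    (hAB : Disjoint A B) (hcover : μ (A ∪ B)ᶜ = 0) : μ E = μ (E ∩ A) + μ (E ∩ B) := by
  rw [← measure_inter_conull hcover, Set.inter_union_distrib_left,
    measure_union (hAB.mono Set.inter_subset_right Set.inter_subset_right) (hE.inter hB)]

theorem measure_avoidEvent_inter (hmeas : ∀ n, Measurable (X n)) (hindep : iIndepFun X μ)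
    (t : ℕ) (y c : ℤ) :
    μ (avoidEvent X x t y ∩ {ω | X t ω = c}) = μ (avoidEvent X x t y) * μ {ω | X t ω = c} := by
  have hpast_future := indep_iSup_of_disjoint (fun i => (hmeas i).comap_le) hindep.iIndep
    (S := Set.Iio t) (T := {t}) (by simp)
  refine (Indep_iff _ _ μ).1 hpast_future _ _ (measurableSet_avoidEvent x t y) ?_
  exact le_iSup₂ (f := fun i (_ : i ∈ ({t} : Set ℕ)) => MeasurableSpace.comap (X i) inferInstance)
    t rfl _ ⟨{c}, measurableSet_singleton c, rfl⟩

theorem measure_avoidEvent [IsProbabilityMeasure μ] (hmeas : ∀ n, Measurable (X n))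
    (hindep : iIndepFun X μ) (hup : ∀ n, μ {ω | X n ω = 1} = 1 / 2)
    (hdown : ∀ n, μ {ω | X n ω = -1} = 1 / 2) (hx : x ≠ 0) (t : ℕ) (y : ℤ) :
    μ (avoidEvent X x t y) = avoidCount x t y * 2⁻¹ ^ t := by
  induction t generalizing y with
  | zero =>
    by_cases hy : y = 0
    · simp [avoidEvent, avoidCount, hy, Ne.symm hx]
    · simp [avoidEvent, avoidCount, hy, Ne.symm hy]
  | succ t ih =>
    by_cases hy : y = x
    · simp [hy, avoidEvent_self, avoidCount]
    have hup_meas : MeasurableSet {ω | X t ω = 1} := hmeas t (measurableSet_singleton 1)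
    have hdown_meas : MeasurableSet {ω | X t ω = -1} := hmeas t (measurableSet_singleton (-1))
    have hdisj : Disjoint {ω | X t ω = 1} {ω | X t ω = -1} :=
      Set.disjoint_left.2 fun ω h1 h2 => by simp_all
    have hcover : μ ({ω | X t ω = 1} ∪ {ω | X t ω = -1})ᶜ = 0 := by
      rw [prob_compl_eq_zero_iff (hup_meas.union hdown_meas), measure_union hdisj hdown_meas, hup,
        hdown, ENNReal.add_halves]
    have hmeas_event : MeasurableSet (avoidEvent X x (t + 1) y) :=
      iSup₂_le (fun i _ => (hmeas i).comap_le) _ (measurableSet_avoidEvent x (t + 1) y)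
    rw [measure_eq_inter_add_inter hmeas_event hdown_meas hdisj hcover,
      avoidEvent_succ_inter hy, avoidEvent_succ_inter hy, measure_avoidEvent_inter hmeas hindep,
      measure_avoidEvent_inter hmeas hindep, ih, ih, hup, hdown, avoidCount, if_neg hy]
    push_cast
    rw [sub_neg_eq_add, one_div]
    ring

end Probability

end SimpleRandomWalk

open MeasureTheory ProbabilityTheory SimpleRandomWalk

/-- For a simple symmetric random walk on ℤ started at 0 and a positive integer `x`,
the expected number of visits to `x - 1` strictly before the first visit to `x` is 2. -/
theorem expected_visits_before_hitting
    {Ω : Type*} [MeasureSpace Ω]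
    [IsProbabilityMeasure (volume : Measure Ω)]
    (X : ℕ → Ω → ℤ)
    (hmeas : ∀ n, Measurable (X n))
    (hindep : iIndepFun X volume)
    (hup : ∀ n, volume {ω | X n ω = 1} = 1 / 2)
    (hdown : ∀ n, volume {ω | X n ω = -1} = 1 / 2)
    (x : ℤ) (hx : 0 < x) :
    ∑' t : ℕ, (volume {ω | (∑ i ∈ Finset.range t, X i ω) = x - 1 ∧
      ∀ s ≤ t, (∑ i ∈ Finset.range s, X i ω) ≠ x}).toReal = 2 := by
  have hprob (t : ℕ) : (volume (avoidEvent X x t (x - 1))).toReal =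
      (avoidCount x t (x - 1) : ℝ) / 2 ^ t := by
    rw [measure_avoidEvent hmeas hindep hup hdown hx.ne', ENNReal.toReal_mul, ENNReal.toReal_pow,
      ENNReal.toReal_inv, div_eq_mul_inv, inv_pow]
    simp
  exact (tsum_congr hprob).trans (hasSum_avoidCount_div_pow hx).tsum_eq
end

section
/- There exists a constant C such that for all integers y and even v ≥ 2: |H(y, v−2) − 2H(y,v) + H(y,v+2)| ≤ C·(y⁴/v⁴ + 1/v²)·H(y, v+2). -/
private lemma choose_id1 (n k : ℕ) (h1 : 1 ≤ k) (hk : k ≤ n + 1) :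
    (n+2).choose k * (k * (n+2-k)) = n.choose (k-1) * ((n+1)*(n+2)) := by
  obtain ⟨j, rfl⟩ : ∃ j, k = j + 1 := ⟨k-1, by omega⟩
  have e1 : (n+2) * ((n+1).choose j) = (n+2).choose (j+1) * (j+1) :=
    Nat.add_one_mul_choose_eq (n+1) j
  have e2 : (n+1).choose j * (n+2-(j+1)) = n.choose j * (n+1) := by
    rw [show n+2-(j+1) = n+1-j from by omega]
    exact (Nat.choose_mul_succ_eq n j).symm
  calc (n+2).choose (j+1) * ((j+1) * (n+2-(j+1)))
      = ((n+2).choose (j+1) * (j+1)) * (n+2-(j+1)) := by ring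
    _ = (n+2) * ((n+1).choose j * (n+2-(j+1))) := by rw [← e1]; ring
    _ = (n+2) * (n.choose j * (n+1)) := by rw [e2]
    _ = n.choose (j+1-1) * ((n+1)*(n+2)) := by simp; ring

private lemma choose_id2 (n k : ℕ) (h2 : 2 ≤ k) (hkn : k ≤ n) (hn : 2 ≤ n) :
    (n+2).choose k * (k*(k-1)*(n+2-k)*(n+1-k)) = (n-2).choose (k-2) * ((n-1)*n*(n+1)*(n+2)) := by
  obtain ⟨m, rfl⟩ : ∃ m, n = m + 2 := ⟨n-2, by omega⟩
  obtain ⟨j, rfl⟩ : ∃ j, k = j + 2 := ⟨k-2, by omega⟩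
  have e1 := choose_id1 (m+2) (j+2) (by omega) (by omega)
  have e2 := choose_id1 m (j+1) (by omega) (by omega)
  rw [show m+2+2-(j+2) = m+2-j from by omega] at e1 ⊢
  rw [show j+2-1 = j+1 from by omega] at e1
  rw [show m+2-(j+1) = m+1-j from by omega] at e2
  rw [show m+2+1-(j+2) = m+1-j from by omega]
  rw [show j+2-1 = j+1 from by omega, show j+2-2 = j from by omega,
    show m+2-2 = m from by omega, show m+2-1 = m+1 from by omega]
  simp only [Nat.add_sub_cancel] at e1 e2
  calc (m+2+2).choose (j+2) * ((j+2)*(j+1)*(m+2-j)*(m+1-j))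
      = ((m+2+2).choose (j+2) * ((j+2)*(m+2-j))) * ((j+1)*(m+1-j)) := by ring
    _ = ((m+2).choose (j+1) * ((m+2+1)*(m+2+2))) * ((j+1)*(m+1-j)) := by rw [e1]
    _ = ((m+2).choose (j+1) * ((j+1)*(m+1-j))) * ((m+3)*(m+4)) := by ring
    _ = (m.choose j * ((m+1)*(m+2))) * ((m+3)*(m+4)) := by rw [e2]
    _ = m.choose j * ((m+1)*(m+2)*(m+3)*(m+4)) := by ring

set_option maxHeartbeats 1600000 in
theorem H_second_difference_bound :
    ∃ C : ℝ, 0 < C ∧ ∀ y v : ℤ, 2 ≤ v → (2 : ℤ) ∣ v →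
      |H y (v - 2) - 2 * H y v + H y (v + 2)| ≤
        C * ((y : ℝ) ^ 4 / (v : ℝ) ^ 4 + 1 / (v : ℝ) ^ 2) * H y (v + 2) := by
  refine ⟨20, by norm_num, fun y v hv _ => ?_⟩
  have hvR : (2:ℝ) ≤ (v:ℝ) := by exact_mod_cast hv
  by_cases hpar : (2:ℤ) ∣ (v - y)
  · by_cases hy : |y| ≤ v + 2
    · -- main case
      rw [Int.abs_eq_natAbs] at hy
      obtain ⟨n, hn⟩ : ∃ n : ℕ, (n:ℤ) = v := ⟨v.toNat, by omega⟩
      obtain ⟨k, hk⟩ : ∃ k : ℕ, 2*(k:ℤ) = v + 2 + y := by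
        obtain ⟨m, hm⟩ := hpar
        exact ⟨(v+1-m).toNat, by omega⟩
      have hn2 : 2 ≤ n := by omega
      have hk2 : k ≤ n + 2 := by omega
      have hH2 : H y (v+2) = (2:ℝ)^(-(v+2)) * ((n+2).choose k) := by
        simp only [H]
        rw [if_pos ⟨by omega, by omega, by rw [Int.abs_eq_natAbs]; omega⟩]
        rw [show (v+2).toNat = n+2 from by omega,
          show ((v+2+y)/2).toNat = k from by omega]
      have hP : 0 < H y (v+2) := by
        rw [hH2]
        have hc : 0 < ((n+2).choose k) := Nat.choose_pos (by omega)
        exact mul_pos (zpow_pos (by norm_num) _) (by exact_mod_cast hc)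
      have hpow : (2:ℝ)^(-v) = 4 * (2:ℝ)^(-(v+2)) := by
        rw [show -v = -(v+2)+2 by ring, zpow_add₀ (two_ne_zero)]; norm_num; ring
      have hpow2 : (2:ℝ)^(-(v-2)) = 16 * (2:ℝ)^(-(v+2)) := by
        rw [show -(v-2) = -(v+2)+4 by ring, zpow_add₀ (two_ne_zero)]; norm_num; ring
      have hnv : (n:ℝ) = (v:ℝ) := by exact_mod_cast hn
      have key1 : H y v * (((v:ℝ)+1) * ((v:ℝ)+2)) = H y (v+2) * (4 * k * ((n:ℝ)+2-k)) := by
        by_cases hyv : |y| ≤ v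
        · rw [Int.abs_eq_natAbs] at hyv
          have hk1 : 1 ≤ k := by omega
          have hkn1 : k ≤ n+1 := by omega
          have hH1 : H y v = (2:ℝ)^(-v) * (n.choose (k-1)) := by
            simp only [H]
            rw [if_pos ⟨by omega, by omega, by rw [Int.abs_eq_natAbs]; omega⟩]
            rw [show v.toNat = n from by omega, show ((v+y)/2).toNat = k-1 from by omega]
          have hidR : ((n+2).choose k : ℝ) * (k * ((n:ℝ)+2-k)) =
              (n.choose (k-1) : ℝ) * (((n:ℝ)+1)*((n:ℝ)+2)) := by
            have hcast := congrArg (Nat.cast : ℕ → ℝ) (choose_id1 n k hk1 hkn1)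
            push_cast [Nat.cast_sub hk2, Nat.cast_sub hk1] at hcast
            linear_combination hcast
          rw [hH1, hH2, hpow, ← hnv]
          linear_combination (4*(2:ℝ)^(-(v+2))) * hidR.symm
        · have h0 : H y v = 0 := by
            simp only [H]; rw [if_neg]; rintro ⟨-, -, h3⟩; exact hyv h3
          rw [Int.abs_eq_natAbs] at hyv
          rw [h0]
          have hk4 : k = 0 ∨ k = n+2 := by omega
          rcases hk4 with rfl | rfl
          · push_cast; ring
          · push_cast; ring
      have key0 : H y (v-2) * (((v:ℝ)-1) * (v:ℝ) * ((v:ℝ)+1) * ((v:ℝ)+2)) =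
          H y (v+2) * (16 * k * ((k:ℝ)-1) * ((n:ℝ)+2-k) * ((n:ℝ)+1-k)) := by
        by_cases hyv : |y| ≤ v - 2
        · rw [Int.abs_eq_natAbs] at hyv
          have hk1 : 2 ≤ k := by omega
          have hkn : k ≤ n := by omega
          have hH0 : H y (v-2) = (2:ℝ)^(-(v-2)) * ((n-2).choose (k-2)) := by
            simp only [H]
            rw [if_pos ⟨by omega, by omega, by rw [Int.abs_eq_natAbs]; omega⟩]
            rw [show (v-2).toNat = n-2 from by omega,
              show ((v-2+y)/2).toNat = k-2 from by omega]
          have hidR : ((n+2).choose k : ℝ) * (k*((k:ℝ)-1)*((n:ℝ)+2-k)*((n:ℝ)+1-k)) =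
              ((n-2).choose (k-2) : ℝ) * (((n:ℝ)-1)*(n:ℝ)*((n:ℝ)+1)*((n:ℝ)+2)) := by
            have hcast := congrArg (Nat.cast : ℕ → ℝ) (choose_id2 n k hk1 hkn hn2)
            push_cast [Nat.cast_sub hk2, Nat.cast_sub hk1, Nat.cast_sub hkn,
              Nat.cast_sub (show 1 ≤ k by omega), Nat.cast_sub (show k ≤ n+1 by omega),
              Nat.cast_sub (show 2 ≤ n by omega), Nat.cast_sub (show 1 ≤ n by omega)] at hcast
            linear_combination hcast
          rw [hH0, hH2, hpow2, ← hnv]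
          linear_combination (16*(2:ℝ)^(-(v+2))) * hidR.symm
        · have h0 : H y (v-2) = 0 := by
            simp only [H]; rw [if_neg]; rintro ⟨-, -, h3⟩; exact hyv h3
          rw [Int.abs_eq_natAbs] at hyv
          rw [h0]
          have hk4 : k = 0 ∨ k = 1 ∨ k = n+1 ∨ k = n+2 := by omega
          rcases hk4 with rfl | rfl | rfl | rfl
          · push_cast; ring
          · push_cast; ring
          · push_cast; ring
          · push_cast; ring
      have hkr : 2*(k:ℝ) = (v:ℝ) + 2 + (y:ℝ) := by exact_mod_cast hk
      have hkk : (k:ℝ) = ((v:ℝ) + 2 + (y:ℝ))/2 := by linarith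
      rw [hnv, hkk] at key0 key1
      have eqE : (H y (v-2) - 2 * H y v + H y (v+2)) * (((v:ℝ)-1) * (v:ℝ) * ((v:ℝ)+1) * ((v:ℝ)+2)) =
          H y (v+2) * ((y:ℝ)^4 - (6*(v:ℝ)+4)*(y:ℝ)^2 + 3*(v:ℝ)^2 + 6*(v:ℝ)) := by
        linear_combination key0 - (2*((v:ℝ)-1)*(v:ℝ)) * key1
      have hvpos : (0:ℝ) < (v:ℝ) := by linarith
      have hv4 : (0:ℝ) < (v:ℝ)^4 := pow_pos hvpos 4
      have hD : (v:ℝ)^4 ≤ ((v:ℝ)-1) * (v:ℝ) * ((v:ℝ)+1) * ((v:ℝ)+2) := by nlinarith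
      have hX : (0:ℝ) ≤ (y:ℝ)^4 + (v:ℝ)^2 := by positivity
      have hXP : (0:ℝ) ≤ ((y:ℝ)^4 + (v:ℝ)^2) * H y (v+2) := mul_nonneg hX hP.le
      have hNub : (y:ℝ)^4 - (6*(v:ℝ)+4)*(y:ℝ)^2 + 3*(v:ℝ)^2 + 6*(v:ℝ) ≤
          10*((y:ℝ)^4 + (v:ℝ)^2) := by
        nlinarith [mul_nonneg (show (0:ℝ) ≤ 6*(v:ℝ)+4 by linarith) (sq_nonneg (y:ℝ)),
          sq_nonneg (y:ℝ)]
      have hNlb : -(10*((y:ℝ)^4 + (v:ℝ)^2)) ≤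
          (y:ℝ)^4 - (6*(v:ℝ)+4)*(y:ℝ)^2 + 3*(v:ℝ)^2 + 6*(v:ℝ) := by
        nlinarith [sq_nonneg ((y:ℝ)^2 - (v:ℝ)), sq_nonneg (y:ℝ),
          mul_nonneg (show (0:ℝ) ≤ 2*(v:ℝ)-4 by linarith) (sq_nonneg (y:ℝ))]
      have hup : (H y (v-2) - 2 * H y v + H y (v+2)) * (v:ℝ)^4 ≤
          20*((y:ℝ)^4 + (v:ℝ)^2) * H y (v+2) := by
        rcases le_or_gt (H y (v-2) - 2 * H y v + H y (v+2)) 0 with hE | hE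
        · have h1 := mul_nonpos_of_nonpos_of_nonneg hE hv4.le
          nlinarith [hXP, h1]
        · have h1 := mul_le_mul_of_nonneg_left hD hE.le
          have h2 := mul_le_mul_of_nonneg_left hNub hP.le
          nlinarith [hXP, h1, h2, eqE]
      have hlo : -(20*((y:ℝ)^4 + (v:ℝ)^2) * H y (v+2)) ≤
          (H y (v-2) - 2 * H y v + H y (v+2)) * (v:ℝ)^4 := by
        rcases le_or_gt 0 (H y (v-2) - 2 * H y v + H y (v+2)) with hE | hE
        · have h1 := mul_nonneg hE hv4.le
          nlinarith [hXP, h1]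
        · have h1 := mul_le_mul_of_nonpos_left hD hE.le
          have h2 := mul_le_mul_of_nonneg_left hNlb hP.le
          nlinarith [hXP, h1, h2, eqE]
      have hv0 : (v:ℝ) ≠ 0 := ne_of_gt hvpos
      have hfe : 20 * ((y:ℝ)^4 / (v:ℝ)^4 + 1/(v:ℝ)^2) * H y (v+2) =
          (20*((y:ℝ)^4 + (v:ℝ)^2) * H y (v+2)) / (v:ℝ)^4 := by
        field_simp
      rw [hfe, le_div_iff₀ hv4]
      have habs : |H y (v-2) - 2 * H y v + H y (v+2)| * (v:ℝ)^4 =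
          |(H y (v-2) - 2 * H y v + H y (v+2)) * (v:ℝ)^4| := by
        rw [abs_mul, abs_of_pos hv4]
      rw [habs]
      exact abs_le.mpr ⟨hlo, hup⟩
    · -- |y| > v + 2 : everything vanishes
      have h2 : H y (v+2) = 0 := by
        simp only [H]; rw [if_neg]; rintro ⟨-, -, h3⟩; exact hy h3
      have h1 : H y v = 0 := by
        simp only [H]; rw [if_neg]; rintro ⟨-, -, h3⟩; exact hy (h3.trans (by omega))
      have h0 : H y (v-2) = 0 := by
        simp only [H]; rw [if_neg]; rintro ⟨-, -, h3⟩; exact hy (h3.trans (by omega))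
      rw [h0, h1, h2]
      simp
  · -- wrong parity : everything vanishes
    have h2 : H y (v+2) = 0 := by
      simp only [H]; rw [if_neg]; rintro ⟨-, hd, -⟩; exact hpar (by omega)
    have h1 : H y v = 0 := by
      simp only [H]; rw [if_neg]; rintro ⟨-, hd, -⟩; exact hpar (by omega)
    have h0 : H y (v-2) = 0 := by
      simp only [H]; rw [if_neg]; rintro ⟨-, hd, -⟩; exact hpar (by omega)
    rw [h0, h1, h2]
    simp
end

section
/- There exist constants c, C > 0 such that for every integer y ≥ 1, c·y^{-2} ≤ |INF(y, t_max(y))| ≤ C·y^{-2}, where t_max(y) = ⌊(y²−4)/3⌋ + 2 and INF(y,t) = −(y/t)H(y,t). -/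
open Real Stirling

/-!
Write `y = k - m` and `t = k + m`, so that `H y t = C(t, k) / 2^t` and
`INF y t = -(y / t) H y t`. Since `t_max y ≈ y² / 3`, the quantity `y / √t` stays in
`[1, √3]`, and `y² |INF y (t_max y)| = (y / √t)³ · √t C(t, k) / 2^t`. The factor
`√t C(t, k) / 2^t` is bounded above and below by Stirling's formula, in the effective form
`√π ≤ stirlingSeq n ≤ stirlingSeq 1`, together with the entropy estimate
`0 ≤ k log (2k / t) + m log (2m / t) ≤ (k - m)² / t`. The values `y ≤ 3`, where `m = 0`,
are computed directly.
-/

lemma three_mul_tmax (y : ℤ) : 3 * tmax y = y ^ 2 ∨ 3 * tmax y = y ^ 2 + 2 := by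
  have hsq : y ^ 2 % 3 = 0 ∨ y ^ 2 % 3 = 1 := by
    have h : y % 3 = 0 ∨ y % 3 = 1 ∨ y % 3 = 2 := by omega
    rw [sq, Int.mul_emod]
    rcases h with h | h | h <;> simp [h]
  rw [tmax, Int.fdiv_eq_ediv_of_nonneg _ (by norm_num)]
  omega

lemma two_dvd_tmax_sub (y : ℤ) : 2 ∣ tmax y - y := by
  have h : 2 ∣ y ^ 2 - y := by
    rw [show y ^ 2 - y = y * (y - 1) by ring]
    exact (Int.even_mul_pred_self y).two_dvd
  rcases three_mul_tmax y with h3 | h3 <;> omega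

lemma exists_eq_sub_and_tmax_eq_add (y : ℤ) (hy : 1 ≤ y) :
    ∃ k m : ℕ, y = k - m ∧ tmax y = k + m := by
  have hsq : 3 * y - 2 ≤ y ^ 2 := by nlinarith [sq_nonneg (2 * y - 3)]
  have := two_dvd_tmax_sub y
  rcases three_mul_tmax y with h3 | h3 <;>
    exact ⟨((tmax y + y) / 2).toNat, ((tmax y - y) / 2).toNat, by omega, by omega⟩

lemma H_natCast_sub (k m : ℕ) : H (k - m) (k + m) = (k + m).choose k / 2 ^ (k + m) := by
  have hcond : 0 ≤ (k + m : ℤ) ∧ (2 : ℤ) ∣ (k + m) - (k - m) ∧ |(k - m : ℤ)| ≤ k + m :=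
    ⟨by positivity, ⟨m, by ring⟩, abs_le.mpr ⟨by omega, by omega⟩⟩
  have hidx : (((k + m : ℤ) + (k - m)) / 2).toNat = k := by omega
  rw [H, if_pos hcond, hidx, zpow_neg, div_eq_inv_mul]
  norm_cast

lemma INF_natCast_sub {k m : ℕ} (hkm : k + m ≠ 0) :
    INF (k - m) (k + m) = -((k - m : ℝ) / (k + m)) * H (k - m) (k + m) := by
  have hpos : (0 : ℝ) < k + m := by exact_mod_cast Nat.pos_of_ne_zero hkm
  rw [INF, if_neg (by omega), H_natCast_sub]
  rcases Nat.eq_zero_or_pos m with rfl | hm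
  · have hout : H ((k : ℤ) - (0 : ℕ) + 1) (k + (0 : ℕ) - 1) = 0 := by
      rw [H, if_neg]
      rintro ⟨-, -, habs⟩
      rw [abs_le] at habs
      omega
    rw [hout]
    field_simp
    simp
  obtain ⟨m, rfl⟩ := Nat.exists_eq_add_one_of_ne_zero hm.ne'
  have hshift : H ((k : ℤ) - (m + 1 : ℕ) + 1) (k + (m + 1 : ℕ) - 1) = H (k - m) (k + m) := by
    push_cast; ring_nf
  have hchoose : ((k + m).choose k : ℝ) * (k + m + 1) = (k + m + 1).choose k * (m + 1) := by
    have h := Nat.choose_mul_succ_eq (k + m) k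
    rw [show k + m + 1 - k = m + 1 by omega] at h
    exact_mod_cast h
  rw [hshift, H_natCast_sub, ← add_assoc, pow_succ]
  field_simp
  push_cast
  linear_combination (2 : ℝ) * hchoose

lemma sq_mul_abs_INF_natCast_sub {k m : ℕ} (hmk : m ≤ k) (hkm : k + m ≠ 0) :
    ((k : ℝ) - m) ^ 2 * |INF (k - m) (k + m)| =
      ((k - m) / √(k + m : ℝ)) ^ 3 * (√(k + m : ℝ) * ((k + m).choose k / 2 ^ (k + m))) := by
  have hpos : (0 : ℝ) < k + m := by exact_mod_cast Nat.pos_of_ne_zero hkm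
  have hsqrt : √(k + m : ℝ) ^ 2 = k + m := sq_sqrt hpos.le
  have hy : (0 : ℝ) ≤ k - m := by rw [sub_nonneg]; exact_mod_cast hmk
  rw [INF_natCast_sub hkm, H_natCast_sub, abs_mul, abs_neg, abs_of_nonneg (by positivity),
    abs_of_nonneg (by positivity)]
  have : √(k + m : ℝ) ≠ 0 := by positivity
  field_simp
  rw [pow_succ, hsqrt]
  ring

namespace Real

lemma sub_le_mul_log_div {a c : ℝ} (ha : 0 < a) (hc : 0 < c) : a - c ≤ a * log (a / c) := by
  have h := one_sub_inv_le_log_of_pos (div_pos ha hc)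
  rw [inv_div] at h
  calc a - c = a * (1 - c / a) := by field_simp
    _ ≤ a * log (a / c) := by gcongr

lemma mul_log_div_le {a c : ℝ} (ha : 0 < a) (hc : 0 < c) : a * log (a / c) ≤ a ^ 2 / c - a := by
  calc a * log (a / c) ≤ a * (a / c - 1) := by gcongr; exact log_le_sub_one_of_pos (by positivity)
    _ = a ^ 2 / c - a := by ring

lemma log_mul_rpow_self {a b : ℝ} (ha : 0 < a) (hb : 0 < b) :
    log (a ^ a * b ^ b) = log (((a + b) / 2) ^ (a + b)) +
      (a * log (a / ((a + b) / 2)) + b * log (b / ((a + b) / 2))) := by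
  rw [log_mul (by positivity) (by positivity), log_rpow ha, log_rpow hb, log_rpow (by positivity),
    log_div ha.ne' (by positivity), log_div hb.ne' (by positivity)]
  ring

lemma half_add_rpow_le_rpow_mul_rpow {a b : ℝ} (ha : 0 < a) (hb : 0 < b) :
    ((a + b) / 2) ^ (a + b) ≤ a ^ a * b ^ b := by
  rw [← log_le_log_iff (by positivity) (by positivity), log_mul_rpow_self ha hb]
  have := sub_le_mul_log_div ha (c := (a + b) / 2) (by positivity)
  have := sub_le_mul_log_div hb (c := (a + b) / 2) (by positivity)
  linarith

lemma rpow_mul_rpow_le_half_add_rpow_mul_exp {a b : ℝ} (ha : 0 < a) (hb : 0 < b) :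
    a ^ a * b ^ b ≤ ((a + b) / 2) ^ (a + b) * exp ((a - b) ^ 2 / (a + b)) := by
  rw [← log_le_log_iff (by positivity) (by positivity), log_mul_rpow_self ha hb,
    log_mul (by positivity) (by positivity), log_exp]
  have := mul_log_div_le ha (c := (a + b) / 2) (by positivity)
  have := mul_log_div_le hb (c := (a + b) / 2) (by positivity)
  have hchi : a ^ 2 / ((a + b) / 2) - a + (b ^ 2 / ((a + b) / 2) - b) = (a - b) ^ 2 / (a + b) := by
    field_simp; ring
  linarith

end Real

namespace Stirling

lemma stirlingSeq_le_stirlingSeq_one {n : ℕ} (hn : n ≠ 0) : stirlingSeq n ≤ stirlingSeq 1 := by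
  obtain ⟨m, rfl⟩ := Nat.exists_eq_add_one_of_ne_zero hn
  exact stirlingSeq'_antitone (Nat.zero_le m)

lemma choose_div_two_pow_eq {K M : ℕ} (hK : K ≠ 0) (hM : M ≠ 0) :
    ((K + M).choose K : ℝ) / 2 ^ (K + M) =
      stirlingSeq (K + M) / (stirlingSeq K * stirlingSeq M) *
        (√(2 * (K + M)) / (√(2 * K) * √(2 * M))) *
        (((K + M : ℝ) / 2) ^ (K + M) / (K ^ K * M ^ M)) := by
  rw [Nat.cast_choose ℝ (Nat.le_add_right K M), Nat.add_sub_cancel_left]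
  simp only [stirlingSeq, div_pow]
  push_cast
  field_simp
  ring

lemma sqrt_mul_choose_div_two_pow_eq {K M : ℕ} (hK : K ≠ 0) (hM : M ≠ 0) :
    √(K + M : ℝ) * ((K + M).choose K / 2 ^ (K + M)) =
      stirlingSeq (K + M) / (stirlingSeq K * stirlingSeq M) *
        √((K + M : ℝ) ^ 2 / (2 * K * M)) * (((K + M : ℝ) / 2) ^ (K + M) / (K ^ K * M ^ M)) := by
  have hsqrt : √(K + M : ℝ) * (√(2 * (K + M)) / (√(2 * K) * √(2 * M))) =
      √((K + M : ℝ) ^ 2 / (2 * K * M)) := by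
    rw [← mul_div_assoc, ← sqrt_mul (by positivity), ← sqrt_mul (by positivity),
      ← sqrt_div (by positivity)]
    congr 1
    ring
  rw [choose_div_two_pow_eq hK hM, ← hsqrt]
  ring

lemma sqrt_pi_div_sq_le_stirlingSeq_add_div_mul {K M : ℕ} (hK : K ≠ 0) (hM : M ≠ 0) :
    √π / stirlingSeq 1 ^ 2 ≤ stirlingSeq (K + M) / (stirlingSeq K * stirlingSeq M) := by
  have hπ : 0 < √π := sqrt_pos.2 pi_pos
  have hKπ := sqrt_pi_le_stirlingSeq hK
  have hMπ := sqrt_pi_le_stirlingSeq hM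
  rw [sq]
  exact div_le_div₀ (by linarith [sqrt_pi_le_stirlingSeq (n := K + M) (by omega)])
    (sqrt_pi_le_stirlingSeq (by omega)) (mul_pos (by linarith) (by linarith))
    (mul_le_mul (stirlingSeq_le_stirlingSeq_one hK) (stirlingSeq_le_stirlingSeq_one hM)
      (by linarith) (by linarith [stirlingSeq_le_stirlingSeq_one hK]))

lemma stirlingSeq_add_div_mul_le {K M : ℕ} (hK : K ≠ 0) (hM : M ≠ 0) :
    stirlingSeq (K + M) / (stirlingSeq K * stirlingSeq M) ≤ stirlingSeq 1 / π := by
  have hπ : 0 < √π := sqrt_pos.2 pi_pos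
  have hsum := sqrt_pi_le_stirlingSeq (n := K + M) (by omega)
  rw [← mul_self_sqrt pi_pos.le]
  exact div_le_div₀ (by linarith [stirlingSeq_le_stirlingSeq_one (n := K + M) (by omega)])
    (stirlingSeq_le_stirlingSeq_one (by omega)) (by positivity)
    (mul_le_mul (sqrt_pi_le_stirlingSeq hK) (sqrt_pi_le_stirlingSeq hM) hπ.le
      (by linarith [sqrt_pi_le_stirlingSeq hK]))

theorem exists_le_sqrt_mul_choose_div_two_pow (A : ℝ) :
    ∃ c > 0, ∀ K M : ℕ, K ≠ 0 → M ≠ 0 → ((K : ℝ) - M) ^ 2 ≤ A * (K + M) →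
      c ≤ √(K + M : ℝ) * ((K + M).choose K / 2 ^ (K + M)) := by
  have hs1 : 0 < stirlingSeq 1 := by rw [stirlingSeq_one]; positivity
  refine ⟨√π / stirlingSeq 1 ^ 2 * √2 * exp (-A), by positivity, fun K M hK hM hKM => ?_⟩
  have hK' : (0 : ℝ) < K := by positivity
  have hM' : (0 : ℝ) < M := by positivity
  have hentropy : exp (-A) ≤ ((K + M : ℝ) / 2) ^ (K + M) / (K ^ K * M ^ M) := by
    have h : (K : ℝ) ^ K * M ^ M ≤ ((K + M : ℝ) / 2) ^ (K + M) * exp ((K - M) ^ 2 / (K + M)) := by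
      simpa only [← rpow_natCast, Nat.cast_add] using rpow_mul_rpow_le_half_add_rpow_mul_exp hK' hM'
    have hA : exp ((K - M) ^ 2 / (K + M)) * exp (-A) ≤ 1 := by
      have : ((K : ℝ) - M) ^ 2 / (K + M) ≤ A := by
        rw [div_le_iff₀ (by positivity)]; linarith
      rw [← exp_add, exp_le_one_iff]
      linarith
    rw [le_div_iff₀ (by positivity)]
    calc exp (-A) * (K ^ K * M ^ M)
        ≤ exp (-A) * (((K + M : ℝ) / 2) ^ (K + M) * exp ((K - M) ^ 2 / (K + M))) := by gcongr
      _ = ((K + M : ℝ) / 2) ^ (K + M) * (exp ((K - M) ^ 2 / (K + M)) * exp (-A)) := by ring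
      _ ≤ ((K + M : ℝ) / 2) ^ (K + M) := mul_le_of_le_one_right (by positivity) hA
  have hsqrt : √2 ≤ √((K + M : ℝ) ^ 2 / (2 * K * M)) := by
    apply sqrt_le_sqrt
    rw [le_div_iff₀ (by positivity)]
    nlinarith [sq_nonneg ((K : ℝ) - M)]
  have hstirling := sqrt_pi_div_sq_le_stirlingSeq_add_div_mul hK hM
  have hfront :=
    mul_le_mul hstirling hsqrt (by positivity) ((by positivity : (0 : ℝ) ≤ _).trans hstirling)
  rw [sqrt_mul_choose_div_two_pow_eq hK hM]
  exact mul_le_mul hfront hentropy (exp_pos _).le ((by positivity : (0 : ℝ) ≤ _).trans hfront)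

theorem exists_sqrt_mul_choose_div_two_pow_le :
    ∃ C > 0, ∀ K M : ℕ, K ≠ 0 → M ≠ 0 → ((K : ℝ) + M) ^ 2 ≤ 16 * K * M →
      √(K + M : ℝ) * ((K + M).choose K / 2 ^ (K + M)) ≤ C := by
  have hs1 : 0 < stirlingSeq 1 := by rw [stirlingSeq_one]; positivity
  refine ⟨stirlingSeq 1 / π * √8, by positivity, fun K M hK hM hKM => ?_⟩
  have hK' : (0 : ℝ) < K := by positivity
  have hM' : (0 : ℝ) < M := by positivity
  have hentropy : ((K + M : ℝ) / 2) ^ (K + M) / (K ^ K * M ^ M) ≤ 1 := by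
    have h : ((K + M : ℝ) / 2) ^ (K + M) ≤ K ^ K * M ^ M := by
      simpa only [← rpow_natCast, Nat.cast_add] using half_add_rpow_le_rpow_mul_rpow hK' hM'
    exact div_le_one_of_le₀ h (by positivity)
  have hsqrt : √((K + M : ℝ) ^ 2 / (2 * K * M)) ≤ √8 := by
    apply sqrt_le_sqrt
    rw [div_le_iff₀ (by positivity)]
    linarith
  have hstirling := stirlingSeq_add_div_mul_le hK hM
  rw [sqrt_mul_choose_div_two_pow_eq hK hM, ← mul_one (_ * √8)]
  gcongr

end Stirling

theorem exists_bounds_sq_mul_abs_INF :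
    ∃ c > 0, ∃ C > 0, ∀ k m : ℕ, m ≠ 0 → m < k → ((k : ℝ) - m) ^ 2 ≤ 3 * (k + m) →
      3 * (k + m) ≤ ((k : ℝ) - m) ^ 2 + 2 →
      c ≤ ((k : ℝ) - m) ^ 2 * |INF (k - m) (k + m)| ∧
        ((k : ℝ) - m) ^ 2 * |INF (k - m) (k + m)| ≤ C := by
  obtain ⟨c, hc, hlow⟩ := exists_le_sqrt_mul_choose_div_two_pow 3
  obtain ⟨C, hC, hupp⟩ := exists_sqrt_mul_choose_div_two_pow_le
  refine ⟨c, hc, √3 ^ 3 * C, by positivity, fun k m hm hmk hle hge => ?_⟩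
  have hk : k ≠ 0 := by omega
  have hm1 : (1 : ℝ) ≤ m := by exact_mod_cast Nat.one_le_iff_ne_zero.mpr hm
  have hmk' : (m : ℝ) + 1 ≤ k := by exact_mod_cast hmk
  have hpos : (0 : ℝ) < k + m := by positivity
  -- `16 k m = 4 (t² - y²) ≥ 4 t² - 12 t ≥ t²`, as `m ≠ 0` and `3 t ≤ y² + 2` force `t ≥ 6`.
  have hspread : ((k : ℝ) + m) ^ 2 ≤ 16 * k * m := by nlinarith
  have hu₁ : 1 ≤ (k - m) / √(k + m : ℝ) := by
    rw [one_le_div (sqrt_pos.2 hpos), sqrt_le_left (by linarith)]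
    nlinarith
  have hu₂ : (k - m) / √(k + m : ℝ) ≤ √3 := by
    rw [div_le_iff₀ (sqrt_pos.2 hpos), ← sqrt_mul zero_le_three,
      le_sqrt (by linarith) (by positivity)]
    exact hle
  rw [sq_mul_abs_INF_natCast_sub hmk.le (by omega)]
  constructor
  · calc c = 1 ^ 3 * c := by ring
      _ ≤ _ := by gcongr; exact hlow k m hk hm hle
  · gcongr
    exact hupp k m hk hm hspread

theorem inf_tmax_order :
    ∃ c C : ℝ, 0 < c ∧ 0 < C ∧ ∀ y : ℤ, 1 ≤ y →
      c / (y : ℝ) ^ 2 ≤ |INF y (tmax y)| ∧ |INF y (tmax y)| ≤ C / (y : ℝ) ^ 2 := by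
  obtain ⟨c, hc, C, hC, hbounds⟩ := exists_bounds_sq_mul_abs_INF
  refine ⟨min c (1 / 2), max C (9 / 8), by positivity, by positivity, fun y hy => ?_⟩
  have hy2 : (0 : ℝ) < (y : ℝ) ^ 2 := by positivity
  rw [div_le_iff₀ hy2, le_div_iff₀ hy2, mul_comm]
  obtain ⟨k, m, rfl, ht⟩ := exists_eq_sub_and_tmax_eq_add y hy
  have htmax : ((k : ℝ) - m) ^ 2 ≤ 3 * (k + m) ∧ 3 * (k + m) ≤ ((k : ℝ) - m) ^ 2 + 2 := by
    have h : ((k : ℤ) - m) ^ 2 ≤ 3 * (k + m) ∧ 3 * (k + m) ≤ ((k : ℤ) - m) ^ 2 + 2 := by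
      rw [← ht]; rcases three_mul_tmax ((k : ℤ) - m) with h | h <;> constructor <;> linarith
    exact_mod_cast h
  rw [ht]
  push_cast
  rcases Nat.eq_zero_or_pos m with rfl | hm
  · have hk₁ : 1 ≤ k := by omega
    have hk₃ : k ≤ 3 := by push_cast at htmax; exact_mod_cast (by nlinarith : (k : ℝ) ≤ 3)
    refine ⟨(min_le_right _ _).trans ?_, (le_max_right _ _).trans' ?_⟩ <;>
    rw [INF_natCast_sub (by omega), H_natCast_sub] <;>
    interval_cases k <;> norm_num
  · obtain ⟨hlow, hupp⟩ := hbounds k m hm.ne' (by omega) htmax.1 htmax.2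
    exact ⟨(min_le_left _ _).trans hlow, hupp.trans (le_max_left _ _)⟩
end

section
/- For every odd integer L ≥ 1 there exists c > 0 (independent of L) such that ∑_{y=1}^{L} ( (1/2)H(y, y²) − (1/2)H(y+L+1, (y+L+1)²) ) ≥ c · log L, where H is the simple random walk heat kernel. -/
/-!
Writing `y = 2j + r` with `r ∈ {0, 1}` and `y² = k + l` with `k - l = r`, the kernel on the
parabola is `H(y, y²) = C(k + l, k + j) / 2^(k + l)`. Comparing `C(k + l, k + j)` with the central
term `C(k + l, k)` through the ratios of consecutive binomial coefficients gives Gaussian factors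
`exp (-j(j + r)/(k + j))` and `exp (-j(j + r)/(l - j + 1))`, both of order `e^(-1/2)`, while the
central term is `2^(k + l) · centralProb k` and `(2k ∓ 1) · centralProb k ^ 2` is monotone,
hence pinned between its values at `k = 8`. So `y · H(y, y²) ∈ [2/5, 11/20]` for `y ≥ 4`, and
directly for `y ≤ 3` (the limit is `√(2/π) e^(-1/2) ≈ 0.484`). The `y`-th summand is then at
least `(1/5)/y - (11/40)/(y + L + 1)`; the first part sums to at least `(1/5) log (L + 1)`, the
second to at most `(11/40) log ((2L + 1)/(L + 1))`, and `((2L + 1)/(L + 1))³ ≤ (L + 1)²` leaves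
`(1/60) log L`.
-/

open Real Finset

lemma H_natCast_add_two_mul (x i : ℕ) :
    H x (x + 2 * i) = ((x + 2 * i).choose (x + i) : ℝ) / 2 ^ (x + 2 * i) := by
  have hcond : 0 ≤ (x + 2 * i : ℤ) ∧ 2 ∣ (2 * i : ℤ) ∧ |(x : ℤ)| ≤ x + 2 * i :=
    ⟨by positivity, ⟨i, by ring⟩, by rw [abs_of_nonneg (by positivity)]; omega⟩
  have hidx : ((x + 2 * i : ℤ) + x) / 2 = ((x + i : ℕ) : ℤ) := by omega
  have hcast : (x + 2 * i : ℤ) = ((x + 2 * i : ℕ) : ℤ) := by push_cast; ring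
  rw [H, add_sub_cancel_left, if_pos hcond, hidx, hcast, Int.toNat_natCast, Int.toNat_natCast,
    zpow_neg, zpow_natCast, div_eq_inv_mul]

noncomputable def centralProb (m : ℕ) : ℝ := (m.centralBinom : ℝ) / 4 ^ m

lemma centralProb_succ (m : ℕ) :
    centralProb (m + 1) = centralProb m * ((2 * m + 1) / (2 * m + 2)) := by
  have h : ((m + 1 : ℕ) : ℝ) * (m + 1).centralBinom = 2 * (2 * m + 1) * m.centralBinom := by
    exact_mod_cast Nat.succ_mul_centralBinom_succ m
  unfold centralProb
  push_cast at h
  field_simp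
  rw [pow_succ]
  linear_combination 2 * 4 ^ m * h

lemma monotone_two_mul_sub_one_mul_centralProb_sq :
    Monotone fun m : ℕ ↦ (2 * m - 1) * centralProb m ^ 2 := by
  refine monotone_nat_of_le_succ fun m ↦ ?_
  rw [← sub_nonneg]
  have h : (2 * ((m + 1 : ℕ) : ℝ) - 1) * centralProb (m + 1) ^ 2
      - (2 * m - 1) * centralProb m ^ 2 = centralProb m ^ 2 * (6 * m + 5) / (2 * m + 2) ^ 2 := by
    rw [centralProb_succ]
    field_simp
    push_cast
    ring
  rw [h]
  positivity

lemma antitone_two_mul_add_one_mul_centralProb_sq :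
    Antitone fun m : ℕ ↦ (2 * m + 1) * centralProb m ^ 2 := by
  refine antitone_nat_of_succ_le fun m ↦ ?_
  rw [← sub_nonneg]
  have h : (2 * m + 1) * centralProb m ^ 2
      - (2 * ((m + 1 : ℕ) : ℝ) + 1) * centralProb (m + 1) ^ 2
      = centralProb m ^ 2 * (2 * m + 1) / (2 * m + 2) ^ 2 := by
    rw [centralProb_succ]
    field_simp
    push_cast
    ring
  rw [h]
  positivity

lemma centralProb_eight : centralProb 8 = 6435 / 32768 := by
  rw [centralProb, Nat.centralBinom_eq_two_mul_choose]
  norm_num [Nat.choose_eq_factorial_div_factorial, Nat.factorial]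

lemma choose_div_two_pow_eq_centralProb {k l : ℕ} (hlk : l ≤ k) (hkl : k ≤ l + 1) :
    ((k + l).choose k : ℝ) / 2 ^ (k + l) = centralProb k := by
  unfold centralProb
  obtain rfl | rfl : k = l ∨ k = l + 1 := by omega
  · rw [Nat.centralBinom_eq_two_mul_choose, two_mul, pow_add, ← mul_pow]
    norm_num
  · have h : (l + 1).centralBinom = 2 * (2 * l + 1).choose (l + 1) := by
      rw [Nat.centralBinom_eq_two_mul_choose, show 2 * (l + 1) = 2 * l + 1 + 1 by ring,
        Nat.choose_succ_succ, Nat.choose_symm_half]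
      ring
    rw [h, show l + 1 + l = 2 * l + 1 by ring]
    push_cast
    rw [pow_succ, pow_mul, pow_succ]
    field_simp
    ring

lemma mul_centralProb_mem_Icc {k : ℕ} (hk : 8 ≤ k) {y : ℝ} (hy : 0 ≤ y)
    (hlo : 2 * k - 1 ≤ y ^ 2) (hhi : y ^ 2 ≤ 2 * k + 1) :
    y * centralProb k ∈ Set.Icc (19 / 25) (81 / 100) := by
  have hw : 0 ≤ centralProb k := by unfold centralProb; positivity
  have hA := monotone_two_mul_sub_one_mul_centralProb_sq hk
  have hB := antitone_two_mul_add_one_mul_centralProb_sq hk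
  simp only [centralProb_eight] at hA hB
  constructor
  · rw [← pow_le_pow_iff_left₀ (by norm_num) (by positivity) two_ne_zero]
    nlinarith [sq_nonneg (centralProb k)]
  · rw [← pow_le_pow_iff_left₀ (by positivity) (by norm_num) two_ne_zero]
    nlinarith [sq_nonneg (centralProb k)]

lemma choose_add_succ_mul {k l j : ℕ} (hj : j < l) :
    ((k + l).choose (k + (j + 1)) : ℝ) * (k + j + 1) = (k + l).choose (k + j) * (l - j) := by
  have h := Nat.choose_succ_right_eq (k + l) (k + j)
  rw [show k + l - (k + j) = l - j by omega] at h
  rw [← add_assoc, ← Nat.cast_sub hj.le]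
  exact_mod_cast h

lemma choose_add_le_choose_mul_exp {k l j : ℕ} (hlk : l ≤ k) (hjl : j ≤ l) :
    ((k + l).choose (k + j) : ℝ) ≤ (k + l).choose k * exp (-(j * (j + k - l)) / (k + j)) := by
  induction j with
  | zero => simp
  | succ j ih =>
    have hjl' : j < l := hjl
    have hlj : (0 : ℝ) < l - j := by rw [sub_pos]; exact_mod_cast hjl'
    have hkl : (l : ℝ) ≤ k := by exact_mod_cast hlk
    have hkj : (0 : ℝ) < k + j + 1 := by positivity
    have hstep : ((l : ℝ) - j) / (k + j + 1) ≤ exp (-((k - l + 2 * j + 1) / (k + j + 1))) := by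
      convert one_sub_le_exp_neg (((k : ℝ) - l + 2 * j + 1) / (k + j + 1)) using 1
      field_simp
      ring
    have hmono : exp (-(j * (j + k - l)) / (k + j)) ≤ exp (-(j * (j + k - l)) / (k + j + 1)) := by
      gcongr exp ?_
      rw [neg_div, neg_div, neg_le_neg_iff]
      exact div_le_div_of_nonneg_left (by nlinarith) (by linarith) (by linarith)
    calc ((k + l).choose (k + (j + 1)) : ℝ)
        = (k + l).choose (k + j) * (((l : ℝ) - j) / (k + j + 1)) := by
          rw [mul_div_assoc', eq_div_iff hkj.ne', choose_add_succ_mul hjl']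
      _ ≤ (k + l).choose k * exp (-(j * (j + k - l)) / (k + j + 1)) *
          exp (-((k - l + 2 * j + 1) / (k + j + 1))) := by
          refine mul_le_mul ?_ hstep (by positivity) (by positivity)
          exact (ih hjl'.le).trans (mul_le_mul_of_nonneg_left hmono (by positivity))
      _ = (k + l).choose k * exp (-(↑(j + 1) * (↑(j + 1) + k - l)) / (k + ↑(j + 1))) := by
          rw [mul_assoc, ← exp_add]
          congr 2
          push_cast
          field_simp
          ring

lemma choose_mul_exp_le_choose_add {k l j : ℕ} (hlk : l ≤ k) (hjl : j ≤ l) :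
    ((k + l).choose k : ℝ) * exp (-(j * (j + k - l)) / (l - j + 1)) ≤
      (k + l).choose (k + j) := by
  induction j with
  | zero => simp
  | succ j ih =>
    have hjl' : j < l := hjl
    have hlj : (0 : ℝ) < l - j := by rw [sub_pos]; exact_mod_cast hjl'
    have hkl : (l : ℝ) ≤ k := by exact_mod_cast hlk
    have hkj : (0 : ℝ) < k + j + 1 := by positivity
    have hstep : exp (-((k - l + 2 * j + 1) / (l - j))) ≤ ((l : ℝ) - j) / (k + j + 1) := by
      rw [exp_neg, ← inv_div ((k : ℝ) + j + 1)]
      refine inv_anti₀ (div_pos hkj hlj) ?_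
      calc ((k : ℝ) + j + 1) / (l - j) = ((k : ℝ) - l + 2 * j + 1) / (l - j) + 1 := by
            field_simp
            ring
        _ ≤ _ := add_one_le_exp _
    have hmono : exp (-(j * (j + k - l)) / (l - j)) ≤ exp (-(j * (j + k - l)) / (l - j + 1)) := by
      gcongr exp ?_
      rw [neg_div, neg_div, neg_le_neg_iff]
      exact div_le_div_of_nonneg_left (by nlinarith) hlj (by linarith)
    calc (k + l).choose k * exp (-(↑(j + 1) * (↑(j + 1) + k - l)) / (l - ↑(j + 1) + 1))
        = (k + l).choose k * exp (-(j * (j + k - l)) / (l - j)) *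
          exp (-((k - l + 2 * j + 1) / (l - j))) := by
          rw [mul_assoc, ← exp_add]
          congr 2
          push_cast
          rw [show (l : ℝ) - (j + 1) + 1 = l - j by ring]
          field_simp
          ring
      _ ≤ (k + l).choose (k + j) * (((l : ℝ) - j) / (k + j + 1)) := by
          refine mul_le_mul ?_ hstep (by positivity) (by positivity)
          exact (mul_le_mul_of_nonneg_left hmono (by positivity)).trans (ih hjl'.le)
      _ = ((k + l).choose (k + (j + 1)) : ℝ) := by
          rw [mul_div_assoc', div_eq_iff hkj.ne', choose_add_succ_mul hjl']

lemma six_sevenths_pow_four_le_exp : (6 / 7 : ℝ) ^ 4 ≤ exp (-(4 / 7)) := by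
  rw [show -(4 / 7 : ℝ) = (4 : ℕ) * (-(1 / 7)) by norm_num, exp_nat_mul]
  gcongr
  linarith [add_one_le_exp (-(1 / 7))]

lemma exp_neg_two_fifths_le : exp (-(2 / 5)) ≤ 25 / 37 := by
  rw [exp_neg, inv_le_comm₀ (exp_pos _) (by norm_num)]
  linarith [quadratic_le_exp_of_nonneg (x := 2 / 5) (by norm_num)]

lemma H_sq_eq_choose {j r k l : ℕ} (hr : r ≤ 1) (hl : l = 2 * j ^ 2 + 2 * j * r)
    (hk : k = l + r) :
    H ↑(2 * j + r) (↑(2 * j + r) ^ 2) = ((k + l).choose (k + j) : ℝ) / 2 ^ (k + l) := by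
  have hrr : r * r = r := by interval_cases r <;> rfl
  have hjl : j ≤ l := by nlinarith
  have hsq : (2 * j + r) ^ 2 = 2 * j + r + 2 * (l - j) := by
    zify [hjl]
    push_cast [hk, hl]
    nlinarith
  have h := H_natCast_add_two_mul (2 * j + r) (l - j)
  rw [show 2 * j + r + (l - j) = k + j by omega,
    show 2 * j + r + 2 * (l - j) = k + l by omega] at h
  rw [← h]
  congr 1
  exact_mod_cast hsq

lemma exp_bounds_of_parabola {j r k l : ℕ} (hj : 2 ≤ j) (hr : r ≤ 1)
    (hl : l = 2 * j ^ 2 + 2 * j * r) (hk : k = l + r) :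
    (6 / 7) ^ 4 ≤ exp (-(j * (j + k - l)) / (l - j + 1)) ∧
      exp (-(j * (j + k - l)) / (k + j)) ≤ 25 / 37 := by
  have hkl : (k : ℝ) = l + r := by rw [hk]; push_cast; ring
  have hl' : (l : ℝ) = 2 * j ^ 2 + 2 * j * r := by rw [hl]; push_cast; ring
  have hr1 : (r : ℝ) ≤ 1 := by exact_mod_cast hr
  have hj2 : (2 : ℝ) ≤ j := by exact_mod_cast hj
  have hr0 : (0 : ℝ) ≤ r := r.cast_nonneg
  constructor
  · refine six_sevenths_pow_four_le_exp.trans (exp_le_exp.2 ?_)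
    rw [neg_div, neg_le_neg_iff, div_le_iff₀ (by nlinarith), hkl, hl']
    nlinarith
  · refine le_trans (exp_le_exp.2 ?_) exp_neg_two_fifths_le
    rw [neg_div, neg_le_neg_iff, le_div_iff₀ (by positivity), hkl, hl']
    nlinarith

lemma mul_H_sq_mem_Icc_of_four_le {Y : ℕ} (hY : 4 ≤ Y) :
    Y * H Y (Y ^ 2) ∈ Set.Icc (2 / 5) (11 / 20) := by
  obtain ⟨j, r, hr, rfl⟩ : ∃ j r, r ≤ 1 ∧ Y = 2 * j + r :=
    ⟨Y / 2, Y % 2, by omega, by omega⟩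
  set l := 2 * j ^ 2 + 2 * j * r with hl
  set k := l + r with hk
  have hjl : j ≤ l := by nlinarith
  have hk8 : 8 ≤ k := by nlinarith
  have hY2 : ((2 * j + r : ℕ) : ℝ) ^ 2 = k + l := by
    have hr' : (r : ℝ) ^ 2 = r := by interval_cases r <;> norm_num
    push_cast [hk, hl]
    linear_combination hr'
  have hr1 : (r : ℝ) ≤ 1 := by exact_mod_cast hr
  obtain ⟨hYw_lo, hYw_hi⟩ := mul_centralProb_mem_Icc hk8 (y := (2 * j + r : ℕ)) (by positivity)
    (by rw [hY2, hk]; push_cast; linarith) (by rw [hY2, hk]; push_cast; linarith)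
  obtain ⟨hexp_lo, hexp_hi⟩ := exp_bounds_of_parabola (by omega) hr hl hk
  have hw := choose_div_two_pow_eq_centralProb (k := k) (l := l) (by omega) (by omega)
  rw [H_sq_eq_choose hr hl hk]
  constructor
  · calc (2 / 5 : ℝ) ≤ 19 / 25 * (6 / 7) ^ 4 := by norm_num
      _ ≤ ((2 * j + r : ℕ) * centralProb k) * exp (-(j * (j + k - l)) / (l - j + 1)) := by
        gcongr
      _ = (2 * j + r : ℕ) *
          ((k + l).choose k * exp (-(j * (j + k - l)) / (l - j + 1)) / 2 ^ (k + l)) := by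
        rw [← hw]; ring
      _ ≤ _ := by gcongr; exact choose_mul_exp_le_choose_add (by omega) hjl
  · calc ((2 * j + r : ℕ) : ℝ) * ((k + l).choose (k + j) / 2 ^ (k + l))
        ≤ (2 * j + r : ℕ) *
          ((k + l).choose k * exp (-(j * (j + k - l)) / (k + j)) / 2 ^ (k + l)) := by
          gcongr; exact choose_add_le_choose_mul_exp (by omega) hjl
      _ = ((2 * j + r : ℕ) * centralProb k) * exp (-(j * (j + k - l)) / (k + j)) := by
        rw [← hw]; ring
      _ ≤ 81 / 100 * (25 / 37) := by gcongr
      _ ≤ 11 / 20 := by norm_num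

lemma mul_H_sq_mem_Icc {y : ℤ} (hy : 1 ≤ y) :
    y * H y (y ^ 2) ∈ Set.Icc (2 / 5) (11 / 20) := by
  lift y to ℕ using by omega
  rcases le_or_gt 4 y with h | h
  · exact_mod_cast mul_H_sq_mem_Icc_of_four_le h
  · have hy' : 1 ≤ y := by exact_mod_cast hy
    interval_cases y <;> norm_num [H] <;> simp only [Int.reduceToNat] <;> norm_num [Nat.choose]

lemma inv_sub_inv_le_half_H_sub_half_H {y z : ℤ} (hy : 1 ≤ y) (hz : 1 ≤ z) :
    1 / 5 * (y : ℝ)⁻¹ - 11 / 40 * (z : ℝ)⁻¹ ≤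
      1 / 2 * H y (y ^ 2) - 1 / 2 * H z (z ^ 2) := by
  have hlo := (mul_H_sq_mem_Icc hy).1
  have hhi := (mul_H_sq_mem_Icc hz).2
  rw [← div_le_iff₀' (by exact_mod_cast hy), div_eq_mul_inv] at hlo
  rw [← le_div_iff₀' (by exact_mod_cast hz), div_eq_mul_inv] at hhi
  linarith

lemma sum_Icc_one_eq_sum_range (n : ℕ) (f : ℤ → ℝ) :
    ∑ y ∈ Icc (1 : ℤ) n, f y = ∑ i ∈ range n, f (i + 1) := by
  rw [Int.Icc_eq_finset_map, sum_map]
  simp [add_comm]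

lemma log_add_one_le_sum_Icc_inv (n : ℕ) :
    log (n + 1) ≤ ∑ y ∈ Icc (1 : ℤ) n, (y : ℝ)⁻¹ := by
  simpa [sum_Icc_one_eq_sum_range, harmonic] using log_add_one_le_harmonic n

lemma sum_range_inv_le_log {a : ℝ} (ha : 0 < a) (n : ℕ) :
    ∑ i ∈ range n, (a + (i + 1))⁻¹ ≤ log ((a + n) / a) := by
  have hanti : AntitoneOn (fun x : ℝ ↦ x⁻¹) (Set.Icc a (a + n)) :=
    fun x hx y _ hxy ↦ inv_anti₀ (ha.trans_le hx.1) hxy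
  have h := hanti.sum_le_integral
  rw [integral_inv (by simp [Set.uIcc_of_le, ha.not_ge])] at h
  simpa using h

lemma sum_Icc_inv_add_le_log (n : ℕ) :
    ∑ y ∈ Icc (1 : ℤ) n, ((y : ℝ) + n + 1)⁻¹ ≤ log ((2 * n + 1) / (n + 1)) := by
  convert sum_range_inv_le_log (a := n + 1) (by positivity) n using 1
  · rw [sum_Icc_one_eq_sum_range]
    push_cast
    exact sum_congr rfl fun i _ ↦ by ring_nf
  · ring_nf

lemma one_div_sixty_mul_log_le {x : ℝ} (hx : 1 ≤ x) :
    1 / 60 * log x ≤ 1 / 5 * log (x + 1) - 11 / 40 * log ((2 * x + 1) / (x + 1)) := by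
  have hpow : ((2 * x + 1) / (x + 1)) ^ 3 ≤ (x + 1) ^ 2 := by
    rw [div_pow, div_le_iff₀ (by positivity)]
    nlinarith [pow_le_pow_left₀ zero_le_one hx 4, pow_le_pow_left₀ zero_le_one hx 3]
  have h := log_le_log (by positivity) hpow
  rw [log_pow, log_pow] at h
  push_cast at h
  have hmono : log x ≤ log (x + 1) := log_le_log (by positivity) (by linarith)
  linarith

theorem interval_lower_bound_sum :
    ∃ c : ℝ, 0 < c ∧ ∀ L : ℤ, 1 ≤ L → Odd L →
      c * Real.log (L : ℝ) ≤
        ∑ y ∈ Finset.Icc (1 : ℤ) L,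
          ((1 / 2) * H y (y ^ 2) - (1 / 2) * H (y + L + 1) ((y + L + 1) ^ 2)) := by
  refine ⟨1 / 60, by norm_num, fun L hL _ ↦ ?_⟩
  lift L to ℕ using by omega
  calc 1 / 60 * log (L : ℝ)
      ≤ 1 / 5 * log (L + 1) - 11 / 40 * log ((2 * L + 1) / (L + 1)) :=
        one_div_sixty_mul_log_le (by exact_mod_cast hL)
    _ ≤ 1 / 5 * ∑ y ∈ Icc (1 : ℤ) L, (y : ℝ)⁻¹ -
          11 / 40 * ∑ y ∈ Icc (1 : ℤ) L, ((y : ℝ) + L + 1)⁻¹ := by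
        gcongr
        exacts [log_add_one_le_sum_Icc_inv L, sum_Icc_inv_add_le_log L]
    _ = ∑ y ∈ Icc (1 : ℤ) L, (1 / 5 * (y : ℝ)⁻¹ - 11 / 40 * ((y : ℝ) + L + 1)⁻¹) :=
        by rw [sum_sub_distrib, mul_sum, mul_sum]
    _ ≤ _ := sum_le_sum fun y hy ↦ by
        have hy1 := (mem_Icc.1 hy).1
        simpa using inv_sub_inv_le_half_H_sub_half_H hy1 (z := y + L + 1) (by omega)
end
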